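/- Let G^{[Σ]} ⊆ I^{[Σ]} and H ⊆ Syz(I^{[Σ]}) satisfy: (1) every g^{[β]} ∈ G^{[Σ]} has g ≠ 0; (2) G^{[Σ]} is complete and H is sig-complete; (3) every module term σ ∈ T(Σ) of the form coefficient times u a ε_i b is reducible by H ∪ {β : g^{[β]} ∈ G^{[Σ]}}; (4) every regular ambiguity of elements of G^{[Σ]} is covered by (G^{[Σ]}, H). Then G^{[Σ]} is a signature Gröbner basis of I^{[Σ]} and H is a syzygy basis of I^{[Σ]}. -/

import Mathlib

/-!  Signature Gröbner bases in the mixed algebra `R[x₁,…,x_k]⟨y₁,…,y_n⟩`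
over a principal ideal domain `R`, following Hofstadler–Verron. -/

open Finsupp

/-- A mixed monomial `v·w`, with `v` a commutative monomial in `x₁,…,x_k`
(recorded by its exponent vector) and `w` a word in the noncommutative
variables `y₁,…,y_n`. -/
@[ext]
structure MMon (k n : ℕ) where
  c : Fin k →₀ ℕ
  w : FreeMonoid (Fin n)

namespace MMon

instance (k n : ℕ) : One (MMon k n) := ⟨⟨0, 1⟩⟩
noncomputable instance (k n : ℕ) : Mul (MMon k n) := ⟨fun a b => ⟨a.c + b.c, a.w * b.w⟩⟩

@[simp] lemma mul_c {k n : ℕ} (a b : MMon k n) : (a * b).c = a.c + b.c := rfl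
@[simp] lemma mul_w {k n : ℕ} (a b : MMon k n) : (a * b).w = a.w * b.w := rfl
@[simp] lemma one_c {k n : ℕ} : (1 : MMon k n).c = 0 := rfl
@[simp] lemma one_w {k n : ℕ} : (1 : MMon k n).w = 1 := rfl

noncomputable instance (k n : ℕ) : Monoid (MMon k n) where
  mul_assoc a b c := by ext : 1 <;> simp [add_assoc, mul_assoc]
  one_mul a := by ext : 1 <;> simp
  mul_one a := by ext : 1 <;> simp

end MMon

/-- A module monomial `u·a·ε_i·b` of the free bimodule `Σ = (A ⊗_{R[X]} A)^r`. -/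
@[ext]
structure ModMon (k n r : ℕ) where
  u : Fin k →₀ ℕ
  a : FreeMonoid (Fin n)
  i : Fin r
  b : FreeMonoid (Fin n)

instance {k n r : ℕ} [NeZero r] : Inhabited (ModMon k n r) := ⟨⟨0, 1, default, 1⟩⟩

/-- The mixed algebra `A = R[x₁,…,x_k]⟨y₁,…,y_n⟩`, realised as the monoid
algebra of the monoid of mixed monomials. -/
abbrev MixedAlg (R : Type) [CommRing R] (k n : ℕ) : Type := MonoidAlgebra R (MMon k n)

/-- The free `A`-bimodule `Σ = (A ⊗_{R[X]} A)^r`, realised as the free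
`R`-module on the module monomials `u·a·ε_i·b`. -/
abbrev SigModule (R : Type) [CommRing R] (k n r : ℕ) : Type := ModMon k n r →₀ R

section Defs

variable {R : Type} [CommRing R] {k n r : ℕ}

/-- The term `c·m` of `A` (an element of `T(A)` when `c ≠ 0`). -/
noncomputable def trm (m : MMon k n) (c : R) : MixedAlg R k n := MonoidAlgebra.single m c

/-- The word `b ∈ ⟨Y⟩`, viewed as an element of `A`. -/
noncomputable def wrd (b : FreeMonoid (Fin n)) : MixedAlg R k n :=
  MonoidAlgebra.single ⟨0, b⟩ 1

/-- Multiplication `m·σ` of a module monomial by a mixed monomial on the left. -/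
noncomputable def mulL (m : MMon k n) (σ : ModMon k n r) : ModMon k n r :=
  ⟨m.c + σ.u, m.w * σ.a, σ.i, σ.b⟩

/-- Multiplication `σ·m` of a module monomial by a mixed monomial on the right. -/
noncomputable def mulR (σ : ModMon k n r) (m : MMon k n) : ModMon k n r :=
  ⟨σ.u + m.c, σ.a, σ.i, σ.b * m.w⟩

/-- The two-sided multiple `m·σ·b` of a module monomial by a mixed monomial `m`
on the left and a word `b` on the right. -/
noncomputable def mulLR (m : MMon k n) (σ : ModMon k n r) (b : FreeMonoid (Fin n)) : ModMon k n r :=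
  ⟨m.c + σ.u, m.w * σ.a, σ.i, σ.b * b⟩

/-- The left action of `A` on the bimodule `Σ`. -/
noncomputable def actL (f : MixedAlg R k n) (α : SigModule R k n r) : SigModule R k n r :=
  Finsupp.sum f.coeff fun m cm => Finsupp.sum α fun σ cσ => Finsupp.single (mulL m σ) (cm * cσ)

/-- The right action of `A` on the bimodule `Σ`. -/
noncomputable def actR (α : SigModule R k n r) (f : MixedAlg R k n) : SigModule R k n r :=
  Finsupp.sum f.coeff fun m cm => Finsupp.sum α fun σ cσ => Finsupp.single (mulR σ m) (cσ * cm)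

/-- The two-sided multiple `t·α·b` of `α ∈ Σ` by the term `t = c·m` on the left
and the word `b` on the right. -/
noncomputable def scaleLR (m : MMon k n) (c : R) (α : SigModule R k n r)
    (b : FreeMonoid (Fin n)) : SigModule R k n r :=
  Finsupp.sum α fun σ cσ => Finsupp.single (mulLR m σ b) (c * cσ)

/-- The `A`-bimodule homomorphism `Σ → A`, `α ↦ ᾱ`, sending `ε_i` to `f_i`
(where `F i = f_i` are the generators). -/
noncomputable def barMap (F : Fin r → MixedAlg R k n) (α : SigModule R k n r) :
    MixedAlg R k n :=
  Finsupp.sum α fun σ cσ =>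
    trm ⟨σ.u, σ.a⟩ cσ * F σ.i * wrd σ.b

/-- The basis vector `ε_i` of `Σ`. -/
noncomputable def epsMod (i : Fin r) : SigModule R k n r :=
  Finsupp.single ⟨0, 1, i, 1⟩ 1

/-- The labeled module `I^{[Σ]}`: pairs `f^{[α]}` with `ᾱ = f`. -/
def Labeled (F : Fin r → MixedAlg R k n) (p : MixedAlg R k n × SigModule R k n r) : Prop :=
  barMap F p.2 = p.1

/-- A syzygy of `I^{[Σ]}`: an element `α ∈ Σ` with `ᾱ = 0`. -/
def IsSyzygy (F : Fin r → MixedAlg R k n) (γ : SigModule R k n r) : Prop :=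
  barMap F γ = 0

section Orders

variable [LinearOrder (MMon k n)] [LinearOrder (ModMon k n r)]

/-- The leading monomial of `f ∈ A` (with `LM 0 = ⊥`). -/
noncomputable def LMb (f : MixedAlg R k n) : WithBot (MMon k n) := f.coeff.support.max

/-- The leading monomial of `f ∈ A` (defaulting to `1` for `f = 0`). -/
noncomputable def LMd (f : MixedAlg R k n) : MMon k n := (f.coeff.support.max).unbotD 1

/-- The leading coefficient of `f ∈ A` (`0` for `f = 0`). -/
noncomputable def LC (f : MixedAlg R k n) : R := f.coeff (LMd f)

/-- The leading term of `f ∈ A`, as an element of `A` (`0` for `f = 0`). -/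
noncomputable def LTerm (f : MixedAlg R k n) : MixedAlg R k n := trm (LMd f) (LC f)

/-- The signature monomial of `α ∈ Σ` (with `⊥` for `α = 0`): the `⪯`-largest
monomial of the support of `α`. -/
noncomputable def sigb (α : SigModule R k n r) : WithBot (ModMon k n r) := α.support.max

variable [NeZero r]

/-- The signature monomial of `α ∈ Σ`, defaulting for `α = 0`. -/
noncomputable def sigMd (α : SigModule R k n r) : ModMon k n r :=
  (α.support.max).unbotD default

/-- The coefficient of the signature of `α`. -/
noncomputable def sigC (α : SigModule R k n r) : R := α (sigMd α)

/-- The signature `sig(α)` of `α ∈ Σ`, as a term, i.e. a single-term element of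
`Σ` (`0` for `α = 0`).  Equality `sig α = sig β` of signatures as *terms* is
`sigT α = sigT β`; the relation `sig α ≃ sig β` is `sigb α = sigb β`; the
relation `sig α ≺ sig β` is `sigb α < sigb β`. -/
noncomputable def sigT (α : SigModule R k n r) : SigModule R k n r :=
  Finsupp.single (sigMd α) (sigC α)

end Orders

/-- The compatibility requirements on the chosen monomial ordering on `M(A)`
and module ordering on `M(Σ)`: both are compatible with multiplication,
both are well-orderings, and they are compatible with each other. -/
structure IsOrderSetting (k n r : ℕ) [LinearOrder (MMon k n)]
    [LinearOrder (ModMon k n r)] : Prop where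
  mon_wf : WellFounded ((· < ·) : MMon k n → MMon k n → Prop)
  mod_wf : WellFounded ((· < ·) : ModMon k n r → ModMon k n r → Prop)
  mon_mul : ∀ a b m m' : MMon k n, m ≤ m' → a * m * b ≤ a * m' * b
  mod_mul : ∀ (m : MMon k n) (b : FreeMonoid (Fin n)) (σ τ : ModMon k n r),
      σ ≤ τ → mulLR m σ b ≤ mulLR m τ b
  compat₁ : ∀ (u v : Fin k →₀ ℕ) (a b : FreeMonoid (Fin n)) (i : Fin r),
      (⟨u, a⟩ : MMon k n) < ⟨v, b⟩ ↔ (⟨u, a, i, 1⟩ : ModMon k n r) < ⟨v, b, i, 1⟩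
  compat₂ : ∀ (u v : Fin k →₀ ℕ) (a b : FreeMonoid (Fin n)) (i : Fin r),
      (⟨u, a⟩ : MMon k n) < ⟨v, b⟩ ↔ (⟨u, 1, i, a⟩ : ModMon k n r) < ⟨v, 1, i, b⟩

end Defs

/-! ### Ambiguities -/

/-- `WordAmb a b c d p q` says that `(a ⊗ b, c ⊗ d, p, q)` is an ambiguity
(overlap, inclusion or external) of the words `p` and `q`. -/
inductive WordAmb {n : ℕ} :
    FreeMonoid (Fin n) → FreeMonoid (Fin n) → FreeMonoid (Fin n) → FreeMonoid (Fin n) →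
    FreeMonoid (Fin n) → FreeMonoid (Fin n) → Prop
  | overlap₁ (a b p q : FreeMonoid (Fin n)) (h : a * p = q * b)
      (ha : a ≠ 1) (hb : b ≠ 1) (hla : a.length < q.length) (hlb : b.length < p.length) :
      WordAmb a 1 1 b p q
  | overlap₂ (a b p q : FreeMonoid (Fin n)) (h : p * a = b * q)
      (ha : a ≠ 1) (hb : b ≠ 1) (hla : a.length < q.length) (hlb : b.length < p.length) :
      WordAmb 1 a b 1 p q
  | inclusion₁ (a b p q : FreeMonoid (Fin n)) (h : p = a * q * b) :
      WordAmb 1 1 a b p q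
  | inclusion₂ (a b p q : FreeMonoid (Fin n)) (h : a * p * b = q) :
      WordAmb a b 1 1 p q
  | external₁ (m p q : FreeMonoid (Fin n)) :
      WordAmb 1 (m * q) (p * m) 1 p q
  | external₂ (m p q : FreeMonoid (Fin n)) :
      WordAmb (q * m) 1 1 (m * p) p q

section Amb

variable {R : Type} [CommRing R] {k n r : ℕ}
variable [LinearOrder (MMon k n)] [LinearOrder (ModMon k n r)]

/-- `IsAmb f g m₁ n₁ m₂ n₂` says that `(m₁ ⊗ n₁, m₂ ⊗ n₂)` is an ambiguity of the
(nonzero) polynomials `f` and `g`: an ambiguity of the word parts of their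
leading monomials, with left cofactors completed by `lcm(u,v)/u` resp.
`lcm(u,v)/v` on the commutative parts. -/
def IsAmb (f g : MixedAlg R k n) (m₁ : MMon k n) (n₁ : FreeMonoid (Fin n))
    (m₂ : MMon k n) (n₂ : FreeMonoid (Fin n)) : Prop :=
  ∃ a b c d : FreeMonoid (Fin n),
    WordAmb a b c d (LMd f).w (LMd g).w ∧
    m₁ = ⟨((LMd f).c ⊔ (LMd g).c) - (LMd f).c, a⟩ ∧ n₁ = b ∧
    m₂ = ⟨((LMd f).c ⊔ (LMd g).c) - (LMd g).c, c⟩ ∧ n₂ = d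

/-- The leading monomial `LM(a) = LM(m₁ f n₁) = LM(m₂ g n₂)` of an ambiguity. -/
noncomputable def ambLM (f : MixedAlg R k n) (m₁ : MMon k n) (n₁ : FreeMonoid (Fin n)) :
    MMon k n :=
  m₁ * LMd f * ⟨0, n₁⟩

variable [IsDomain R] [GCDMonoid R]

/-- The cofactor `lcmlc(f,g)/LC(f)`. -/
noncomputable def cofL (f g : MixedAlg R k n) : R :=
  Classical.choose (dvd_lcm_left (LC f) (LC g))

/-- The cofactor `lcmlc(f,g)/LC(g)`. -/
noncomputable def cofR (f g : MixedAlg R k n) : R :=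
  Classical.choose (dvd_lcm_right (LC f) (LC g))

variable [NeZero r]

/-- The signature `SIG(a) = max(sig(c_f m₁ α n₁), −sig(c_g m₂ β n₂))` (first in
case of tie) of an ambiguity `a = (m₁ ⊗ n₁, m₂ ⊗ n₂)` of `f^{[α]]`, `g^{[β]}`,
as a term (single-term element) of `Σ`. -/
noncomputable def ambSIG (f g : MixedAlg R k n) (α β : SigModule R k n r)
    (m₁ : MMon k n) (n₁ : FreeMonoid (Fin n)) (m₂ : MMon k n) (n₂ : FreeMonoid (Fin n)) :
    SigModule R k n r :=
  if sigb (scaleLR m₂ (cofR f g) β n₂) ≤ sigb (scaleLR m₁ (cofL f g) α n₁) then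
    sigT (scaleLR m₁ (cofL f g) α n₁)
  else
    - sigT (scaleLR m₂ (cofR f g) β n₂)

/-- An ambiguity is regular if `sig(m₁ α n₁) ≄ sig(m₂ β n₂)`. -/
def RegAmb (α β : SigModule R k n r) (m₁ : MMon k n) (n₁ : FreeMonoid (Fin n))
    (m₂ : MMon k n) (n₂ : FreeMonoid (Fin n)) : Prop :=
  sigb (scaleLR m₁ (1 : R) α n₁) ≠ sigb (scaleLR m₂ (1 : R) β n₂)

/-- An ambiguity is singular if `sig(c_f m₁ α n₁) = sig(c_g m₂ β n₂)`. -/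
def SingAmb (f g : MixedAlg R k n) (α β : SigModule R k n r) (m₁ : MMon k n)
    (n₁ : FreeMonoid (Fin n)) (m₂ : MMon k n) (n₂ : FreeMonoid (Fin n)) : Prop :=
  sigT (scaleLR m₁ (cofL f g) α n₁) = sigT (scaleLR m₂ (cofR f g) β n₂)

/-- The polynomial part of the S-polynomial of an ambiguity. -/
noncomputable def SPolP (f g : MixedAlg R k n) (m₁ : MMon k n) (n₁ : FreeMonoid (Fin n))
    (m₂ : MMon k n) (n₂ : FreeMonoid (Fin n)) : MixedAlg R k n :=
  trm m₁ (cofL f g) * f * wrd n₁ - trm m₂ (cofR f g) * g * wrd n₂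

/-- The module part of the S-polynomial of an ambiguity. -/
noncomputable def SPolM (f g : MixedAlg R k n) (α β : SigModule R k n r) (m₁ : MMon k n)
    (n₁ : FreeMonoid (Fin n)) (m₂ : MMon k n) (n₂ : FreeMonoid (Fin n)) :
    SigModule R k n r :=
  scaleLR m₁ (cofL f g) α n₁ - scaleLR m₂ (cofR f g) β n₂

/-- The polynomial part of the G-polynomial of an ambiguity, w.r.t. Bézout
coefficients `c`, `d`. -/
noncomputable def GPolP (c d : R) (f g : MixedAlg R k n) (m₁ : MMon k n)
    (n₁ : FreeMonoid (Fin n)) (m₂ : MMon k n) (n₂ : FreeMonoid (Fin n)) : MixedAlg R k n :=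
  trm m₁ c * f * wrd n₁ + trm m₂ d * g * wrd n₂

/-- The module part of the G-polynomial of an ambiguity, w.r.t. Bézout
coefficients `c`, `d`. -/
noncomputable def GPolM (c d : R) (α β : SigModule R k n r) (m₁ : MMon k n)
    (n₁ : FreeMonoid (Fin n)) (m₂ : MMon k n) (n₂ : FreeMonoid (Fin n)) :
    SigModule R k n r :=
  scaleLR m₁ c α n₁ + scaleLR m₂ d β n₂

/-- `BezoutFor c d f g`: `c, d` are Bézout coefficients for `LC f`, `LC g`. -/
def BezoutFor (c d : R) (f g : MixedAlg R k n) : Prop :=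
  c * LC f + d * LC g = gcd (LC f) (LC g)

end Amb

/-! ### Reductions, bases, cover -/

section Red

variable {R : Type} [CommRing R] {k n r : ℕ}
variable [LinearOrder (MMon k n)] [LinearOrder (ModMon k n r)]

/-- `f^{[α]}` is (top) sig-reducible by `G`: there are `g^{[β]} ∈ G`, a term
`t = c·m` and a word `b` with `LT(t g b) = LT(f) > LT(f - t g b)` and
`sig(t β b) ⪯ sig(α)`. -/
def SigReducible (G : Set (MixedAlg R k n × SigModule R k n r))
    (f : MixedAlg R k n) (α : SigModule R k n r) : Prop :=
  ∃ g β, (g, β) ∈ G ∧ ∃ (m : MMon k n) (c : R) (b : FreeMonoid (Fin n)), c ≠ 0 ∧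
    LTerm (trm m c * g * wrd b) = LTerm f ∧
    LMb (f - trm m c * g * wrd b) < LMb f ∧
    sigb (scaleLR m c β b) ≤ sigb α

/-- `f^{[α]}` is regular sig-reducible by `G`. -/
def RegSigReducible (G : Set (MixedAlg R k n × SigModule R k n r))
    (f : MixedAlg R k n) (α : SigModule R k n r) : Prop :=
  ∃ g β, (g, β) ∈ G ∧ ∃ (m : MMon k n) (c : R) (b : FreeMonoid (Fin n)), c ≠ 0 ∧
    LTerm (trm m c * g * wrd b) = LTerm f ∧
    LMb (f - trm m c * g * wrd b) < LMb f ∧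
    sigb (scaleLR m c β b) < sigb α

/-- `f^{[α]}` is super reducible by `G`: there are `g^{[β]} ∈ G`, a term `t` and
a word `b` with `sig(α) = sig(t β b)` (as terms) and `LM(f) = LM(t g b)`. -/
def SuperReducible [NeZero r] (G : Set (MixedAlg R k n × SigModule R k n r))
    (f : MixedAlg R k n) (α : SigModule R k n r) : Prop :=
  ∃ g β, (g, β) ∈ G ∧ ∃ (m : MMon k n) (c : R) (b : FreeMonoid (Fin n)), c ≠ 0 ∧
    sigT α = sigT (scaleLR m c β b) ∧
    LMb f = LMb (trm m c * g * wrd b)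

/-- `α ∈ Σ` is (top) reducible by the set `H ⊆ Σ`: `sig(α) = sig(t γ b)` for
some `γ ∈ H`, term `t` and word `b`. -/
def ModReducible [NeZero r] (H : Set (SigModule R k n r)) (α : SigModule R k n r) : Prop :=
  ∃ γ ∈ H, ∃ (m : MMon k n) (c : R) (b : FreeMonoid (Fin n)), c ≠ 0 ∧
    sigT α = sigT (scaleLR m c γ b)

/-- `G` is a (strong) signature Gröbner basis of `I^{[Σ]}`. -/
def IsSigGB (F : Fin r → MixedAlg R k n) (G : Set (MixedAlg R k n × SigModule R k n r)) :
    Prop :=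
  ∀ f α, barMap F α = f → f ≠ 0 → SigReducible G f α

/-- `G` is a signature Gröbner basis of `I^{[Σ]}` up to (module monomial)
signature `σ`. -/
def IsSigGBUpTo (F : Fin r → MixedAlg R k n)
    (G : Set (MixedAlg R k n × SigModule R k n r)) (σ : WithBot (ModMon k n r)) : Prop :=
  ∀ f α, barMap F α = f → f ≠ 0 → sigb α < σ → SigReducible G f α

/-- `H` is a syzygy basis of `I^{[Σ]}`. -/
def IsSyzBasis [NeZero r] (F : Fin r → MixedAlg R k n) (H : Set (SigModule R k n r)) :
    Prop :=
  ∀ γ, IsSyzygy F γ → γ ≠ 0 → ModReducible H γ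

variable [IsDomain R] [GCDMonoid R] [NeZero r]

/-- `G` is complete: the G-polynomials (w.r.t. non-singular Bézout coefficients)
of all ambiguities of `G` are sig-reducible by `G`. -/
def CompleteSet (G : Set (MixedAlg R k n × SigModule R k n r)) : Prop :=
  ∀ g₁ β₁ g₂ β₂, (g₁, β₁) ∈ G → (g₂, β₂) ∈ G →
    ∀ m₁ n₁ m₂ n₂, IsAmb g₁ g₂ m₁ n₁ m₂ n₂ →
      ∀ c d, BezoutFor c d g₁ g₂ →
        sigb (GPolM c d β₁ β₂ m₁ n₁ m₂ n₂) = sigb (ambSIG g₁ g₂ β₁ β₂ m₁ n₁ m₂ n₂) →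
        SigReducible G (GPolP c d g₁ g₂ m₁ n₁ m₂ n₂) (GPolM c d β₁ β₂ m₁ n₁ m₂ n₂)

/-- `MonLcm σ₁ σ₂ τ`: the least common multiple `lcm(σ₁,σ₂)` of the module
monomials `σ₁ = u₁a₁ε_jb₁`, `σ₂ = u₂a₂ε_jb₂` is defined and equals `τ`. -/
def MonLcm (σ₁ σ₂ τ : ModMon k n r) : Prop :=
  σ₁.i = σ₂.i ∧ τ.i = σ₁.i ∧ τ.u = σ₁.u ⊔ σ₂.u ∧
  ((τ.a = σ₁.a ∧ ∃ s, σ₁.a = s * σ₂.a) ∨ (τ.a = σ₂.a ∧ ∃ s, σ₂.a = s * σ₁.a)) ∧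
  ((τ.b = σ₁.b ∧ ∃ s, σ₁.b = σ₂.b * s) ∨ (τ.b = σ₂.b ∧ ∃ s, σ₂.b = σ₁.b * s))

/-- `H` is sig-complete: all sig-Combinations of elements of `H` are reducible
by `H`. -/
def SigCompleteSet (H : Set (SigModule R k n r)) : Prop :=
  ∀ γ₁ ∈ H, ∀ γ₂ ∈ H, ∀ τ, MonLcm (sigMd γ₁) (sigMd γ₂) τ →
    ∀ (m₁ : MMon k n) (b₁ : FreeMonoid (Fin n)) (m₂ : MMon k n) (b₂ : FreeMonoid (Fin n)),
      mulLR m₁ (sigMd γ₁) b₁ = τ → mulLR m₂ (sigMd γ₂) b₂ = τ →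
      ∀ c d : R, c * sigC γ₁ + d * sigC γ₂ = gcd (sigC γ₁) (sigC γ₂) →
        ModReducible H (scaleLR m₁ c γ₁ b₁ + scaleLR m₂ d γ₂ b₂)

/-- The ambiguity `a` (of `g₁^{[β₁]}`, `g₂^{[β₂]}`), with signature `SIG(a)` and
leading monomial `LM(a)`, is covered by `(G, H)`: there are `g^{[β]} ∈ G`,
`γ ∈ H`, terms `t, t'` (possibly `0`) and words `b, b'` with
`SIG(a) = sig(t β b) + sig(t' γ b')` and `LM(t g b) < LM(a)`. -/
def CoveredBy (G : Set (MixedAlg R k n × SigModule R k n r))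
    (H : Set (SigModule R k n r)) (Sig : SigModule R k n r) (Lm : MMon k n) : Prop :=
  ∃ g β, (g, β) ∈ G ∧ ∃ γ ∈ H,
    ∃ (m : MMon k n) (c : R) (b : FreeMonoid (Fin n))
      (m' : MMon k n) (c' : R) (b' : FreeMonoid (Fin n)),
      Sig = sigT (scaleLR m c β b) + sigT (scaleLR m' c' γ b') ∧
      LMb (trm m c * g * wrd b) < (Lm : WithBot (MMon k n))

end Red

/-!
Both claims are proved by well-founded induction. For a labeled polynomial `f^{[α]}`, by (3)
either `sig(α)` is reducible by `H`, and subtracting that syzygy multiple lowers the signature, or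
`sig(α) = sig(t β b)` for a multiple `t g b` of an element of `G`; one then inducts on the
signature and, for fixed signature, on `LM(t g b)`. The polynomial `f - t g b` has smaller
signature, so it is sig-reducible, and its reducer either reduces `f` directly or is a second
multiple with the same leading monomial as `t g b`. If the two leading coefficients add up to
`LC(f)`, completeness (2) gives a reducer of the G-polynomial of the underlying ambiguity, which
scales up to a reducer of `f`; if they cancel, the ambiguity is regular and its cover (4)
either makes `sig(α)` reducible by `H` or, after subtracting a syzygy, realises it by a multiple
with smaller leading monomial. The same cancellation argument, applied to
`(-t g b)^{[γ - t β b]}` for a syzygy `γ`, proves that `H` is a syzygy basis; the `H`-parts split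
off along the way are recombined by sig-completeness.
-/

namespace Finsupp

variable {M : Type*} [LinearOrder M] {R : Type*}

section Zero

variable [Zero R] {v : M →₀ R}

lemma support_max_eq_bot_iff : v.support.max = ⊥ ↔ v = 0 := by
  rw [Finset.max_eq_bot, support_eq_empty]

lemma coe_unbotD_support_max (hv : v ≠ 0) (d : M) :
    ((v.support.max.unbotD d : M) : WithBot M) = v.support.max := by
  obtain ⟨x, hx⟩ := Finset.max_of_nonempty (support_nonempty_iff.2 hv)
  rw [hx]
  rfl

lemma apply_unbotD_support_max_ne_zero (hv : v ≠ 0) (d : M) :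
    v (v.support.max.unbotD d) ≠ 0 :=
  mem_support_iff.1 (Finset.mem_of_max (coe_unbotD_support_max hv d).symm)

lemma apply_eq_zero_of_support_max_lt {x : M} (h : v.support.max < x) : v x = 0 :=
  notMem_support_iff.1 (Finset.notMem_of_max_lt_coe h)

lemma support_max_eq_of_le {τ : M} (h : v.support.max ≤ τ) (hτ : v τ ≠ 0) :
    v.support.max = τ :=
  le_antisymm h (Finset.le_max (mem_support_iff.2 hτ))

lemma support_max_lt_of_le {τ : M} (h : v.support.max ≤ τ) (hτ : v τ = 0) :
    v.support.max < τ :=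
  lt_of_le_of_ne h fun he => mem_support_iff.1 (Finset.mem_of_max he) hτ

end Zero

lemma support_max_mapDomain [AddCommMonoid R] {M' : Type*} [LinearOrder M'] {φ : M → M'}
    (hφ : StrictMono φ) (v : M →₀ R) :
    (mapDomain φ v).support.max = v.support.max.map φ := by
  classical
  rw [mapDomain_support_of_injective hφ.injective]
  rcases v.support.eq_empty_or_nonempty with hs | hs
  · simp [hs]
  obtain ⟨a, ha⟩ := Finset.max_of_nonempty hs
  rw [ha, WithBot.map_coe]
  refine le_antisymm (Finset.max_le ?_) (Finset.le_max (Finset.mem_image_of_mem φ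
    (Finset.mem_of_max ha)))
  rintro _ hx
  obtain ⟨y, hy, rfl⟩ := Finset.mem_image.1 hx
  exact WithBot.coe_le_coe.2 (hφ.monotone (Finset.le_max_of_eq hy ha))

section AddGroup

variable [AddGroup R] {v w : M →₀ R}

lemma support_max_add_le : (v + w).support.max ≤ v.support.max ⊔ w.support.max := by
  classical
  exact (Finset.max_mono support_add).trans_eq Finset.max_union

lemma support_max_sub_le : (v - w).support.max ≤ v.support.max ⊔ w.support.max := by
  classical
  exact (Finset.max_mono support_sub).trans_eq Finset.max_union

lemma support_max_sub_lt {τ : M} (hv : v.support.max ≤ τ) (hw : w.support.max ≤ τ)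
    (h : v τ = w τ) : (v - w).support.max < τ :=
  support_max_lt_of_le (support_max_sub_le.trans (sup_le hv hw)) (by rw [sub_apply, h, sub_self])

lemma single_add_single_eq_single {σ₁ σ₂ σ : M} {v₁ v₂ v : R} (hv₁ : v₁ ≠ 0) (hv₂ : v₂ ≠ 0)
    (hv : v ≠ 0) (h : single σ₁ v₁ + single σ₂ v₂ = single σ v) :
    σ₁ = σ ∧ σ₂ = σ ∧ v₁ + v₂ = v := by
  by_cases h12 : σ₁ = σ₂
  · subst h12
    rw [← single_add] at h
    rcases (single_eq_single_iff _ _ _ _).1 h with ⟨h1, h2⟩ | ⟨-, h0⟩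
    · exact ⟨h1, h1, h2⟩
    · exact absurd h0 hv
  · have e₁ := congrArg (· σ₁) h
    have e₂ := congrArg (· σ₂) h
    simp only [add_apply, single_eq_same, single_eq_of_ne h12, single_eq_of_ne (Ne.symm h12),
      add_zero, zero_add] at e₁ e₂
    have h₁ : σ₁ = σ := (single_apply_ne_zero.1 (e₁ ▸ hv₁)).1
    have h₂ : σ₂ = σ := (single_apply_ne_zero.1 (e₂ ▸ hv₂)).1
    exact absurd (h₁.trans h₂.symm) h12

end AddGroup

end Finsupp

section Monomials

variable {k n r : ℕ}

lemma MMon.mul_mul_word_injective (m : MMon k n) (w : FreeMonoid (Fin n)) :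
    Function.Injective (fun x : MMon k n => m * x * ⟨0, w⟩) := by
  intro x y hxy
  simp only [MMon.ext_iff, MMon.mul_c, MMon.mul_w, add_zero] at hxy
  exact MMon.ext (add_left_cancel hxy.1) (mul_left_cancel (mul_right_cancel hxy.2))

lemma MMon.mul_mul_word_assoc (m' x L : MMon k n) (b b' : FreeMonoid (Fin n)) :
    m' * x * L * (⟨0, b * b'⟩ : MMon k n) = m' * (x * L * ⟨0, b⟩) * ⟨0, b'⟩ := by
  ext : 1 <;> simp [mul_assoc]

lemma mulLR_injective (m : MMon k n) (b : FreeMonoid (Fin n)) :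
    Function.Injective (fun σ : ModMon k n r => mulLR m σ b) := by
  intro x y hxy
  simp only [ModMon.ext_iff, mulLR] at hxy
  obtain ⟨h1, h2, h3, h4⟩ := hxy
  exact ModMon.ext (add_left_cancel h1) (mul_left_cancel h2) h3 (mul_right_cancel h4)

lemma mulLR_mulLR (m m' : MMon k n) (σ : ModMon k n r) (b b' : FreeMonoid (Fin n)) :
    mulLR m' (mulLR m σ b) b' = mulLR (m' * m) σ (b * b') := by
  simp [mulLR, add_assoc, mul_assoc]

end Monomials

section Multiples

variable {R : Type} [CommRing R] {k n r : ℕ}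

lemma trm_mul_trm (m m' : MMon k n) (c c' : R) :
    (trm m c * trm m' c' : MixedAlg R k n) = trm (m * m') (c * c') :=
  MonoidAlgebra.single_mul_single ..

lemma trm_zero (m : MMon k n) : trm m (0 : R) = 0 := MonoidAlgebra.single_zero m

lemma wrd_mul_wrd (b b' : FreeMonoid (Fin n)) :
    (wrd b * wrd b' : MixedAlg R k n) = wrd (b * b') := by
  rw [wrd, wrd, wrd, MonoidAlgebra.single_mul_single, mul_one]
  congr 1

lemma trm_mul_trm_mul_mul_wrd (m m' : MMon k n) (c c' : R) (g : MixedAlg R k n)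
    (b b' : FreeMonoid (Fin n)) :
    trm m' c' * (trm m c * g * wrd b) * wrd b' = trm (m' * m) (c' * c) * g * wrd (b * b') := by
  rw [← trm_mul_trm, ← wrd_mul_wrd]
  simp only [mul_assoc]

lemma coeff_trm_mul_mul_wrd (m : MMon k n) (c : R) (g : MixedAlg R k n)
    (b : FreeMonoid (Fin n)) :
    (trm m c * g * wrd b).coeff = mapDomain (fun x : MMon k n => m * x * ⟨0, b⟩) (c • g.coeff) := by
  induction g using MonoidAlgebra.induction_linear with
  | zero => simp [mapDomain_zero]
  | add f g hf hg =>
      rw [mul_add, add_mul, MonoidAlgebra.coeff_add, hf, hg, MonoidAlgebra.coeff_add, smul_add,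
        mapDomain_add]
  | single a v =>
      change (trm m c * trm a v * trm ⟨0, b⟩ 1).coeff = mapDomain _ (c • single a v)
      rw [trm_mul_trm, trm_mul_trm, mul_one, smul_single, mapDomain_single, smul_eq_mul]
      rfl

lemma coeff_trm_mul_mul_wrd_apply (m : MMon k n) (c : R) (g : MixedAlg R k n)
    (b : FreeMonoid (Fin n)) (x : MMon k n) :
    (trm m c * g * wrd b).coeff (m * x * (⟨0, b⟩ : MMon k n)) = c * g.coeff x := by
  rw [coeff_trm_mul_mul_wrd, mapDomain_apply (MMon.mul_mul_word_injective m b), Finsupp.smul_apply,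
    smul_eq_mul]

lemma scaleLR_eq_mapDomain (m : MMon k n) (c : R) (α : SigModule R k n r)
    (b : FreeMonoid (Fin n)) :
    scaleLR m c α b = mapDomain (fun σ => mulLR m σ b) (c • α) := by
  induction α using Finsupp.induction_linear with
  | zero => simp [scaleLR]
  | add f g hf hg =>
      rw [smul_add, mapDomain_add, ← hf, ← hg, scaleLR, scaleLR, scaleLR,
        sum_add_index' (fun _ => by simp) (fun _ _ _ => by rw [mul_add, single_add])]
  | single a v =>
      rw [smul_single, mapDomain_single, scaleLR, sum_single_index (by simp), smul_eq_mul]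

lemma scaleLR_apply_mulLR (m : MMon k n) (c : R) (α : SigModule R k n r)
    (b : FreeMonoid (Fin n)) (σ : ModMon k n r) :
    scaleLR m c α b (mulLR m σ b) = c * α σ := by
  rw [scaleLR_eq_mapDomain, mapDomain_apply (mulLR_injective m b), Finsupp.smul_apply, smul_eq_mul]

@[simp] lemma scaleLR_zero (m : MMon k n) (c : R) (b : FreeMonoid (Fin n)) :
    scaleLR m c (0 : SigModule R k n r) b = 0 := by
  simp [scaleLR_eq_mapDomain]

@[simp] lemma scaleLR_zero_left (m : MMon k n) (α : SigModule R k n r) (b : FreeMonoid (Fin n)) :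
    scaleLR m (0 : R) α b = 0 := by
  simp [scaleLR_eq_mapDomain]

lemma scaleLR_add (m : MMon k n) (c : R) (α β : SigModule R k n r) (b : FreeMonoid (Fin n)) :
    scaleLR m c (α + β) b = scaleLR m c α b + scaleLR m c β b := by
  simp [scaleLR_eq_mapDomain, smul_add, mapDomain_add]

lemma scaleLR_single (m : MMon k n) (c : R) (τ : ModMon k n r) (v : R)
    (b : FreeMonoid (Fin n)) :
    scaleLR m c (single τ v) b = single (mulLR m τ b) (c * v) := by
  rw [scaleLR_eq_mapDomain, smul_single, mapDomain_single, smul_eq_mul]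

lemma scaleLR_scaleLR (m m' : MMon k n) (c c' : R) (α : SigModule R k n r)
    (b b' : FreeMonoid (Fin n)) :
    scaleLR m' c' (scaleLR m c α b) b' = scaleLR (m' * m) (c' * c) α (b * b') := by
  rw [scaleLR_eq_mapDomain, scaleLR_eq_mapDomain, scaleLR_eq_mapDomain, ← mapDomain_smul,
    ← mapDomain_comp, smul_smul]
  congr 1
  funext σ
  exact mulLR_mulLR m m' σ b b'

lemma ne_zero_of_scaleLR_ne_zero {m : MMon k n} {c : R} {α : SigModule R k n r}
    {b : FreeMonoid (Fin n)} (h : scaleLR m c α b ≠ 0) : c ≠ 0 :=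
  fun hc => h (by rw [hc, scaleLR_zero_left])

variable (F : Fin r → MixedAlg R k n)

lemma barMap_single (τ : ModMon k n r) (v : R) :
    barMap F (single τ v) = trm ⟨τ.u, τ.a⟩ v * F τ.i * wrd τ.b := by
  rw [barMap, sum_single_index (by rw [trm_zero, zero_mul, zero_mul])]

@[simp] lemma barMap_zero : barMap F (0 : SigModule R k n r) = 0 := sum_zero_index

lemma barMap_add (α β : SigModule R k n r) :
    barMap F (α + β) = barMap F α + barMap F β :=
  sum_add_index' (fun _ => by rw [trm_zero, zero_mul, zero_mul])
    fun _ _ _ => by rw [trm, MonoidAlgebra.single_add, add_mul, add_mul]; rfl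

lemma barMap_sub (α β : SigModule R k n r) :
    barMap F (α - β) = barMap F α - barMap F β :=
  sum_sub_index fun _ _ _ => by rw [trm, MonoidAlgebra.single_sub, sub_mul, sub_mul]; rfl

lemma barMap_scaleLR (m : MMon k n) (c : R) (γ : SigModule R k n r) (b : FreeMonoid (Fin n)) :
    barMap F (scaleLR m c γ b) = trm m c * barMap F γ * wrd b := by
  induction γ using Finsupp.induction_linear with
  | zero => simp
  | add f g hf hg => rw [scaleLR_add, barMap_add, hf, hg, barMap_add, mul_add, add_mul]
  | single τ v =>
      rw [scaleLR_single, barMap_single, barMap_single]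
      rw [show (wrd (mulLR m τ b).b : MixedAlg R k n) = wrd τ.b * wrd b from
        (wrd_mul_wrd _ _).symm,
        show (⟨(mulLR m τ b).u, (mulLR m τ b).a⟩ : MMon k n) = m * ⟨τ.u, τ.a⟩ from rfl,
        ← trm_mul_trm]
      simp only [mul_assoc]
      rfl

lemma barMap_sub_scaleLR_of_isSyzygy {γ : SigModule R k n r} (hγ : IsSyzygy F γ)
    (α : SigModule R k n r) (m : MMon k n) (c : R) (b : FreeMonoid (Fin n)) :
    barMap F (α - scaleLR m c γ b) = barMap F α := by
  rw [barMap_sub, barMap_scaleLR, hγ, mul_zero, zero_mul, sub_zero]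

end Multiples

section Polynomials

variable {R : Type} [CommRing R] {k n : ℕ} [LinearOrder (MMon k n)] {f h : MixedAlg R k n}

lemma LMb_eq_bot_iff : LMb f = ⊥ ↔ f = 0 := by
  rw [LMb, support_max_eq_bot_iff, MonoidAlgebra.coeff_eq_zero]

lemma coe_LMd (hf : f ≠ 0) : ((LMd f : MMon k n) : WithBot (MMon k n)) = LMb f :=
  coe_unbotD_support_max (MonoidAlgebra.coeff_eq_zero.not.2 hf) 1

lemma LC_ne_zero (hf : f ≠ 0) : LC f ≠ 0 :=
  apply_unbotD_support_max_ne_zero (MonoidAlgebra.coeff_eq_zero.not.2 hf) 1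

@[simp] lemma LC_zero : LC (0 : MixedAlg R k n) = 0 := by
  simp [LC]

lemma LMb_add_le : LMb (f + h) ≤ LMb f ⊔ LMb h := by
  rw [LMb, MonoidAlgebra.coeff_add]
  exact support_max_add_le

lemma LMb_sub_le : LMb (f - h) ≤ LMb f ⊔ LMb h := by
  rw [LMb, MonoidAlgebra.coeff_sub]
  exact support_max_sub_le

lemma LMd_eq_of_le {x : MMon k n} (hle : LMb f ≤ x) (hx : f.coeff x ≠ 0) : LMd f = x := by
  rw [LMd, ← LMb, show LMb f = x from support_max_eq_of_le hle hx]
  rfl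

lemma LTerm_eq_of_le {x : MMon k n} (hle : LMb f ≤ x) (hx : f.coeff x ≠ 0) :
    LTerm f = trm x (f.coeff x) := by
  rw [LTerm, LC, LMd_eq_of_le hle hx]

lemma LTerm_eq_LTerm_iff (hf : f ≠ 0) : LTerm h = LTerm f ↔ LMd h = LMd f ∧ LC h = LC f := by
  refine ⟨fun he => ?_, fun ⟨h1, h2⟩ => by rw [LTerm, LTerm, h1, h2]⟩
  rcases MonoidAlgebra.single_inj.1 he with h12 | ⟨-, h0⟩
  · exact h12
  · exact absurd h0 (LC_ne_zero hf)

lemma LMb_sub_lt_of_LTerm_eq (hf : f ≠ 0) (he : LTerm h = LTerm f) : LMb (f - h) < LMb f := by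
  obtain ⟨h1, h2⟩ := (LTerm_eq_LTerm_iff hf).1 he
  have hh : h ≠ 0 := by
    rintro rfl
    exact LC_ne_zero hf (by rw [← h2, LC_zero])
  rw [LMb, MonoidAlgebra.coeff_sub, ← LMb, ← coe_LMd hf]
  refine support_max_sub_lt (coe_LMd hf).ge ?_ (h2.symm.trans (by rw [LC, h1]))
  rw [← h1, coe_LMd hh]
  rfl

lemma LTerm_sub_of_LMb_lt (hlt : LMb h < LMb f) : LTerm (f - h) = LTerm f := by
  have hf : f ≠ 0 := fun h0 => (LMb_eq_bot_iff.2 h0 ▸ hlt).not_ge bot_le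
  have hval : (f - h).coeff (LMd f) = LC f := by
    have hlt' : h.coeff.support.max < LMd f := by rw [coe_LMd hf]; exact hlt
    rw [MonoidAlgebra.coeff_sub, Finsupp.sub_apply, apply_eq_zero_of_support_max_lt hlt', sub_zero]
    rfl
  have hle : LMb (f - h) ≤ LMd f := by
    rw [coe_LMd hf, LMb, MonoidAlgebra.coeff_sub]
    exact support_max_sub_le.trans (sup_le le_rfl hlt.le)
  rw [LTerm_eq_of_le hle (hval ▸ LC_ne_zero hf), hval, LTerm]

lemma LMb_sub_of_LMb_lt (hlt : LMb h < LMb f) : LMb (f - h) = LMb f := by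
  have hf : f ≠ 0 := fun h0 => (LMb_eq_bot_iff.2 h0 ▸ hlt).not_ge bot_le
  have hfh : f - h ≠ 0 := fun h0 => (sub_eq_zero.1 h0 ▸ hlt).ne rfl
  rw [← coe_LMd hf, ← coe_LMd hfh, ((LTerm_eq_LTerm_iff hf).1 (LTerm_sub_of_LMb_lt hlt)).1]

end Polynomials

section Signatures

variable {R : Type} [CommRing R] {k n r : ℕ} [LinearOrder (ModMon k n r)] [NeZero r]
  {α δ : SigModule R k n r}

omit [NeZero r] in
lemma sigb_eq_bot_iff : sigb α = ⊥ ↔ α = 0 := support_max_eq_bot_iff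

lemma coe_sigMd (hα : α ≠ 0) : ((sigMd α : ModMon k n r) : WithBot (ModMon k n r)) = sigb α :=
  coe_unbotD_support_max hα default

lemma sigC_ne_zero (hα : α ≠ 0) : sigC α ≠ 0 := apply_unbotD_support_max_ne_zero hα default

lemma sigMd_eq_of_le {τ : ModMon k n r} (hle : sigb α ≤ τ) (hτ : α τ ≠ 0) : sigMd α = τ := by
  rw [sigMd, ← sigb, show sigb α = τ from support_max_eq_of_le hle hτ]
  rfl

lemma sigT_eq_of_le {τ : ModMon k n r} (hle : sigb α ≤ τ) (hτ : α τ ≠ 0) :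
    sigT α = single τ (α τ) := by
  rw [sigT, sigC, sigMd_eq_of_le hle hτ]

@[simp] lemma sigT_zero : sigT (0 : SigModule R k n r) = 0 := by
  simp [sigT, sigC]

lemma sigT_eq_zero_iff : sigT α = 0 ↔ α = 0 := by
  refine ⟨fun h => by_contra fun hα => sigC_ne_zero hα (single_eq_zero.1 h), ?_⟩
  rintro rfl
  exact sigT_zero

omit [NeZero r] in
lemma sigb_single {τ : ModMon k n r} {v : R} (hv : v ≠ 0) : sigb (single τ v) = τ := by
  rw [sigb, support_single _ hv, Finset.max_singleton]

lemma sigT_single {τ : ModMon k n r} {v : R} (hv : v ≠ 0) : sigT (single τ v) = single τ v := by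
  rw [sigT_eq_of_le (sigb_single hv).le (by rwa [single_eq_same]), single_eq_same]

lemma sigT_sigT (α : SigModule R k n r) : sigT (sigT α) = sigT α := by
  rcases eq_or_ne α 0 with rfl | hα
  · simp
  · exact sigT_single (sigC_ne_zero hα)

lemma sigT_eq_sigT_iff (hα : α ≠ 0) :
    sigT δ = sigT α ↔ sigMd δ = sigMd α ∧ sigC δ = sigC α := by
  refine ⟨fun he => ?_, fun ⟨h1, h2⟩ => by rw [sigT, sigT, h1, h2]⟩
  rcases (single_eq_single_iff _ _ _ _).1 he with h12 | ⟨-, h0⟩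
  · exact h12
  · exact absurd h0 (sigC_ne_zero hα)

lemma sigb_eq_of_sigT_eq (he : sigT δ = sigT α) : sigb δ = sigb α := by
  rcases eq_or_ne α 0 with rfl | hα
  · rw [sigT_zero, sigT_eq_zero_iff] at he
    rw [he]
  have hδ : δ ≠ 0 := by
    rintro rfl
    exact hα (sigT_eq_zero_iff.1 (by rw [← he, sigT_zero]))
  rw [← coe_sigMd hα, ← coe_sigMd hδ, ((sigT_eq_sigT_iff hα).1 he).1]

lemma sigb_sub_lt_of_sigT_eq (hα : α ≠ 0) (he : sigT δ = sigT α) : sigb (α - δ) < sigb α := by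
  obtain ⟨h1, h2⟩ := (sigT_eq_sigT_iff hα).1 he
  rw [← coe_sigMd hα]
  refine support_max_sub_lt (coe_sigMd hα).ge
    ((sigb_eq_of_sigT_eq he).trans (coe_sigMd hα).symm).le ?_
  exact h2.symm.trans (by rw [sigC, h1])

lemma sigT_sub_of_sigT_eq_add {X₁ X₂ : SigModule R k n r} (hα : α ≠ 0) (hX₁ : X₁ ≠ 0)
    (h : sigT α = sigT X₁ + sigT X₂) : sigT (α - X₂) = sigT X₁ ∧ sigb (α - X₂) = sigb α := by
  rcases eq_or_ne X₂ 0 with rfl | hX₂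
  · rw [sigT_zero, add_zero] at h
    rw [sub_zero]
    exact ⟨h, rfl⟩
  obtain ⟨h₁, h₂, hv⟩ := single_add_single_eq_single (sigC_ne_zero hX₁) (sigC_ne_zero hX₂)
    (sigC_ne_zero hα) h.symm
  have hle : sigb (α - X₂) ≤ sigMd α :=
    support_max_sub_le.trans (sup_le (coe_sigMd hα).ge (h₂ ▸ (coe_sigMd hX₂).ge))
  have hval : (α - X₂) (sigMd α) = sigC X₁ := by
    have hX₂val : X₂ (sigMd α) = sigC X₂ := by rw [← h₂]; rfl
    rw [Finsupp.sub_apply, hX₂val]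
    exact sub_eq_of_eq_add hv.symm
  have hT : sigT (α - X₂) = sigT X₁ := by
    rw [sigT_eq_of_le hle (hval ▸ sigC_ne_zero hX₁), hval, sigT, h₁]
  exact ⟨hT, (sigb_eq_of_sigT_eq hT).trans (by rw [← coe_sigMd hX₁, ← coe_sigMd hα, h₁])⟩

end Signatures

section Compatible

variable {R : Type} [CommRing R] {k n r : ℕ}
  [LinearOrder (MMon k n)] [LinearOrder (ModMon k n r)] (hord : IsOrderSetting k n r)
include hord

lemma MMon.mul_mul_word_strictMono (m : MMon k n) (w : FreeMonoid (Fin n)) :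
    StrictMono (fun x : MMon k n => m * x * ⟨0, w⟩) :=
  Monotone.strictMono_of_injective (fun _ _ h => hord.mon_mul _ _ _ _ h)
    (MMon.mul_mul_word_injective m w)

lemma mulLR_strictMono (m : MMon k n) (b : FreeMonoid (Fin n)) :
    StrictMono (fun σ : ModMon k n r => mulLR m σ b) :=
  Monotone.strictMono_of_injective (fun _ _ h => hord.mod_mul _ _ _ _ h) (mulLR_injective m b)

variable {m : MMon k n} {c : R} {g : MixedAlg R k n} {b : FreeMonoid (Fin n)}
  {α : SigModule R k n r}

lemma LMb_trm_mul_mul_wrd (c : R) (g : MixedAlg R k n) :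
    LMb (trm m c * g * wrd b) = (LMb (c • g)).map (fun x => m * x * ⟨0, b⟩) := by
  rw [LMb, coeff_trm_mul_mul_wrd, support_max_mapDomain (MMon.mul_mul_word_strictMono hord m b)]
  rfl

lemma LMb_trm_mul_mul_wrd_le {x : MMon k n} (hg : LMb g ≤ x) :
    LMb (trm m c * g * wrd b) ≤ m * x * (⟨0, b⟩ : MMon k n) := by
  classical
  rw [LMb_trm_mul_mul_wrd hord, ← WithBot.map_coe (fun x => m * x * (⟨0, b⟩ : MMon k n))]
  exact (MMon.mul_mul_word_strictMono hord m b).monotone.withBot_map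
    ((Finset.max_mono support_smul).trans hg)

lemma sigb_scaleLR (c : R) (α : SigModule R k n r) :
    sigb (scaleLR m c α b) = (sigb (c • α)).map (fun σ => mulLR m σ b) := by
  rw [sigb, scaleLR_eq_mapDomain, support_max_mapDomain (mulLR_strictMono hord m b)]
  rfl

lemma sigb_scaleLR_le {σ : ModMon k n r} (hα : sigb α ≤ σ) :
    sigb (scaleLR m c α b) ≤ mulLR m σ b := by
  classical
  rw [sigb_scaleLR hord, ← WithBot.map_coe (fun σ => mulLR m σ b)]
  exact (mulLR_strictMono hord m b).monotone.withBot_map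
    ((Finset.max_mono support_smul).trans hα)

variable [IsDomain R]

lemma LMb_trm_mul_mul_wrd_of_ne_zero (hc : c ≠ 0) (hg : g ≠ 0) :
    LMb (trm m c * g * wrd b) = m * LMd g * (⟨0, b⟩ : MMon k n) := by
  rw [LMb_trm_mul_mul_wrd hord, LMb, MonoidAlgebra.coeff_smul, support_smul_eq hc, ← LMb,
    ← coe_LMd hg]
  rfl

lemma trm_mul_mul_wrd_ne_zero (hc : c ≠ 0) (hg : g ≠ 0) : trm m c * g * wrd b ≠ 0 := fun h0 =>
  WithBot.bot_ne_coe (LMb_eq_bot_iff.2 h0 ▸ LMb_trm_mul_mul_wrd_of_ne_zero hord hc hg)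

lemma LMd_trm_mul_mul_wrd (hc : c ≠ 0) (hg : g ≠ 0) :
    LMd (trm m c * g * wrd b) = m * LMd g * ⟨0, b⟩ := by
  refine LMd_eq_of_le (LMb_trm_mul_mul_wrd_of_ne_zero hord hc hg).le ?_
  rw [coeff_trm_mul_mul_wrd_apply]
  exact mul_ne_zero hc (LC_ne_zero hg)

lemma LC_trm_mul_mul_wrd (hc : c ≠ 0) (hg : g ≠ 0) : LC (trm m c * g * wrd b) = c * LC g := by
  rw [LC, LMd_trm_mul_mul_wrd hord hc hg, coeff_trm_mul_mul_wrd_apply]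
  rfl

lemma LTerm_trm_mul_mul_wrd (hc : c ≠ 0) (hg : g ≠ 0) :
    LTerm (trm m c * g * wrd b) = trm (m * LMd g * ⟨0, b⟩) (c * LC g) := by
  rw [LTerm, LMd_trm_mul_mul_wrd hord hc hg, LC_trm_mul_mul_wrd hord hc hg]

variable [NeZero r]

lemma sigb_scaleLR_of_ne_zero (hc : c ≠ 0) (hα : α ≠ 0) :
    sigb (scaleLR m c α b) = mulLR m (sigMd α) b := by
  rw [sigb_scaleLR hord, sigb, support_smul_eq hc, ← sigb, ← coe_sigMd hα]
  rfl

lemma scaleLR_ne_zero (hc : c ≠ 0) (hα : α ≠ 0) : scaleLR m c α b ≠ 0 := fun h0 =>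
  WithBot.bot_ne_coe (sigb_eq_bot_iff.2 h0 ▸ sigb_scaleLR_of_ne_zero hord hc hα)

lemma sigMd_scaleLR (hc : c ≠ 0) (hα : α ≠ 0) : sigMd (scaleLR m c α b) = mulLR m (sigMd α) b := by
  refine sigMd_eq_of_le (sigb_scaleLR_of_ne_zero hord hc hα).le ?_
  rw [scaleLR_apply_mulLR]
  exact mul_ne_zero hc (sigC_ne_zero hα)

lemma sigC_scaleLR (hc : c ≠ 0) (hα : α ≠ 0) : sigC (scaleLR m c α b) = c * sigC α := by
  rw [sigC, sigMd_scaleLR hord hc hα, scaleLR_apply_mulLR]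
  rfl

lemma sigT_scaleLR (hc : c ≠ 0) (hα : α ≠ 0) :
    sigT (scaleLR m c α b) = single (mulLR m (sigMd α) b) (c * sigC α) := by
  rw [sigT, sigMd_scaleLR hord hc hα, sigC_scaleLR hord hc hα]

lemma scaleLR_sigT (hc : c ≠ 0) (α : SigModule R k n r) :
    scaleLR m c (sigT α) b = sigT (scaleLR m c α b) := by
  rcases eq_or_ne α 0 with rfl | hα
  · simp
  · rw [sigT, scaleLR_single, sigT_scaleLR hord hc hα]

end Compatible

section Words

lemma FreeMonoid.mul_eq_mul_cases {α : Type*} {x y z w : FreeMonoid α} (h : x * y = z * w) :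
    (∃ u, z = x * u ∧ y = u * w) ∨ (∃ u, x = z * u ∧ w = u * y) := by
  have hl : x.toList ++ y.toList = z.toList ++ w.toList := by
    rw [← FreeMonoid.toList_mul, ← FreeMonoid.toList_mul, h]
  rcases List.append_eq_append_iff.1 hl with ⟨u, hu1, hu2⟩ | ⟨u, hu1, hu2⟩
  · exact .inl ⟨.ofList u, FreeMonoid.toList.injective (by simp [hu1]),
      FreeMonoid.toList.injective (by simp [hu2])⟩
  · exact .inr ⟨.ofList u, FreeMonoid.toList.injective (by simp [hu1]),
      FreeMonoid.toList.injective (by simp [hu2])⟩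

variable {n : ℕ} {a b c d p q : FreeMonoid (Fin n)}

lemma WordAmb.mul_eq (h : WordAmb a b c d p q) : a * p * b = c * q * d := by
  cases h with
  | overlap₁ a b p q h => rw [one_mul, mul_one, h]
  | overlap₂ a b p q h => rw [one_mul, mul_one, h]
  | inclusion₁ a b p q h => rw [one_mul, mul_one, h, mul_assoc]
  | inclusion₂ a b p q h => rw [one_mul, mul_one, h]
  | external₁ m p q => rw [one_mul, mul_one, ← mul_assoc]
  | external₂ m p q => rw [one_mul, mul_one, mul_assoc]

lemma WordAmb.swap (h : WordAmb a b c d p q) : WordAmb c d a b q p := by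
  cases h with
  | overlap₁ _ _ _ _ h ha hb hla hlb => exact .overlap₂ _ _ _ _ h.symm hb ha hlb hla
  | overlap₂ _ _ _ _ h ha hb hla hlb => exact .overlap₁ _ _ _ _ h.symm hb ha hlb hla
  | inclusion₁ _ _ _ _ h => exact .inclusion₂ _ _ _ _ h.symm
  | inclusion₂ _ _ _ _ h => exact .inclusion₁ _ _ _ _ h.symm
  | external₁ m _ _ => exact .external₂ m _ _
  | external₂ m _ _ => exact .external₁ m _ _

lemma FreeMonoid.length_pos_of_ne_one {α : Type*} {x : FreeMonoid α} (hx : x ≠ 1) : 0 < x.length :=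
  Nat.pos_of_ne_zero fun h => hx (FreeMonoid.length_eq_zero.1 h)

lemma WordAmb.exists_of_mul_eq {P Q u wR vR : FreeMonoid (Fin n)} (h : P * wR = u * (Q * vR)) :
    ∃ b d r, WordAmb 1 b u d P Q ∧ wR = b * r ∧ vR = d * r := by
  rcases FreeMonoid.mul_eq_mul_cases h with ⟨t, rfl, ht⟩ | ⟨o, rfl, ho⟩
  · exact ⟨t * Q, 1, vR, .external₁ t P Q, by rw [ht, mul_assoc], (one_mul vR).symm⟩
  rcases FreeMonoid.mul_eq_mul_cases ho with ⟨z, rfl, hz⟩ | ⟨y, rfl, hy⟩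
  · exact ⟨1, z, wR, .inclusion₁ u z _ Q (mul_assoc u Q z).symm, (one_mul wR).symm, hz⟩
  by_cases hu : u = 1
  · subst hu
    exact ⟨y, 1, vR, .inclusion₂ 1 y _ _ (by rw [one_mul, one_mul]), hy, (one_mul vR).symm⟩
  by_cases hy1 : y = 1
  · subst hy1
    exact ⟨1, 1, wR, .inclusion₁ u 1 _ _ (by rw [mul_one, mul_one]), (one_mul wR).symm,
      by simp [hy]⟩
  by_cases ho1 : o = 1
  · subst ho1
    refine ⟨y, 1, vR, ?_, hy, (one_mul vR).symm⟩
    simpa using WordAmb.external₁ 1 u y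
  have ho := FreeMonoid.length_pos_of_ne_one ho1
  exact ⟨y, 1, vR, .overlap₂ y u (u * o) (o * y) (mul_assoc u o y) hy1 hu
    (by rw [FreeMonoid.length_mul]; omega) (by rw [FreeMonoid.length_mul]; omega), hy,
    (one_mul vR).symm⟩

lemma WordAmb.exists_of_mul_mul_eq {P Q wL wR vL vR : FreeMonoid (Fin n)}
    (h : wL * P * wR = vL * Q * vR) :
    ∃ a b c d l r, WordAmb a b c d P Q ∧ wL = l * a ∧ wR = b * r ∧ vL = l * c ∧ vR = d * r := by
  rw [mul_assoc, mul_assoc] at h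
  rcases FreeMonoid.mul_eq_mul_cases h with ⟨u, rfl, hu⟩ | ⟨u, rfl, hu⟩
  · obtain ⟨b, d, r, hamb, hb, hd⟩ := WordAmb.exists_of_mul_eq hu
    exact ⟨1, b, u, d, wL, r, hamb, (mul_one wL).symm, hb, rfl, hd⟩
  · obtain ⟨d, b, r, hamb, hd, hb⟩ := WordAmb.exists_of_mul_eq hu
    exact ⟨u, b, 1, d, vL, r, hamb.swap, rfl, hb, (mul_one vL).symm, hd⟩

end Words

section Ambiguities

variable {k n r : ℕ}

lemma exists_monLcm {σ₁ σ₂ s : ModMon k n r} {m₁ m₂ : MMon k n} {b₁ b₂ : FreeMonoid (Fin n)}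
    (h₁ : mulLR m₁ σ₁ b₁ = s) (h₂ : mulLR m₂ σ₂ b₂ = s) :
    ∃ τ, MonLcm σ₁ σ₂ τ ∧ (∃ p q, mulLR p σ₁ q = τ) ∧ (∃ p q, mulLR p σ₂ q = τ) ∧
      ∃ p q, mulLR p τ q = s := by
  subst h₁
  simp only [mulLR, ModMon.mk.injEq] at h₂
  obtain ⟨hu, ha, hi, hb⟩ := h₂
  obtain ⟨A, t₁, t₂, l, hA₁, hA₂, hA, hAlcm⟩ : ∃ A t₁ t₂ l : FreeMonoid (Fin n),
      t₁ * σ₁.a = A ∧ t₂ * σ₂.a = A ∧ l * A = m₁.w * σ₁.a ∧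
      ((A = σ₁.a ∧ ∃ t, σ₁.a = t * σ₂.a) ∨ (A = σ₂.a ∧ ∃ t, σ₂.a = t * σ₁.a)) := by
    rcases FreeMonoid.mul_eq_mul_cases ha with ⟨u, hu1, hu2⟩ | ⟨u, hu1, hu2⟩
    · exact ⟨σ₂.a, u, 1, m₂.w, hu2.symm, one_mul _, ha, .inr ⟨rfl, u, hu2⟩⟩
    · exact ⟨σ₁.a, 1, u, m₁.w, one_mul _, hu2.symm, rfl, .inl ⟨rfl, u, hu2⟩⟩
  obtain ⟨B, t₁', t₂', l', hB₁, hB₂, hB, hBlcm⟩ : ∃ B t₁ t₂ l : FreeMonoid (Fin n),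
      σ₁.b * t₁ = B ∧ σ₂.b * t₂ = B ∧ B * l = σ₁.b * b₁ ∧
      ((B = σ₁.b ∧ ∃ t, σ₁.b = σ₂.b * t) ∨ (B = σ₂.b ∧ ∃ t, σ₂.b = σ₁.b * t)) := by
    rcases FreeMonoid.mul_eq_mul_cases hb with ⟨u, hu1, hu2⟩ | ⟨u, hu1, hu2⟩
    · exact ⟨σ₁.b, 1, u, b₁, mul_one _, hu1.symm, rfl, .inl ⟨rfl, u, hu1⟩⟩
    · exact ⟨σ₂.b, u, 1, b₂, hu1.symm, mul_one _, hb, .inr ⟨rfl, u, hu1⟩⟩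
  have hle₁ : σ₁.u ≤ σ₁.u ⊔ σ₂.u := le_sup_left
  have hle₂ : σ₂.u ≤ σ₁.u ⊔ σ₂.u := le_sup_right
  have hsup : σ₁.u ⊔ σ₂.u ≤ m₁.c + σ₁.u := sup_le le_add_self (hu ▸ le_add_self)
  refine ⟨⟨σ₁.u ⊔ σ₂.u, A, σ₁.i, B⟩, ⟨hi.symm, rfl, rfl, hAlcm, hBlcm⟩,
    ⟨⟨σ₁.u ⊔ σ₂.u - σ₁.u, t₁⟩, t₁', ?_⟩, ⟨⟨σ₁.u ⊔ σ₂.u - σ₂.u, t₂⟩, t₂', ?_⟩,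
    ⟨⟨m₁.c + σ₁.u - σ₁.u ⊔ σ₂.u, l⟩, l', ?_⟩⟩ <;>
    simp only [mulLR, ModMon.mk.injEq]
  · exact ⟨tsub_add_cancel_of_le hle₁, hA₁, trivial, hB₁⟩
  · exact ⟨tsub_add_cancel_of_le hle₂, hA₂, hi, hB₂⟩
  · exact ⟨tsub_add_cancel_of_le hsup, hA, trivial, hB⟩

variable {R : Type} [CommRing R] [LinearOrder (MMon k n)] [LinearOrder (ModMon k n r)]

lemma exists_isAmb_of_LMd_eq (hord : IsOrderSetting k n r) {g g₀ : MixedAlg R k n}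
    {σ σ₀ : ModMon k n r} {m m₀ : MMon k n} {b b₀ : FreeMonoid (Fin n)}
    (hM : m * LMd g * ⟨0, b⟩ = m₀ * LMd g₀ * ⟨0, b₀⟩)
    (hs : mulLR m₀ σ₀ b₀ < mulLR m σ b) :
    ∃ m₁ n₁ m₂ n₂ m' b', IsAmb g g₀ m₁ n₁ m₂ n₂ ∧
      m = m' * m₁ ∧ b = n₁ * b' ∧ m₀ = m' * m₂ ∧ b₀ = n₂ * b' ∧
      m₂ * LMd g₀ * ⟨0, n₂⟩ = m₁ * LMd g * ⟨0, n₁⟩ ∧ mulLR m₂ σ₀ n₂ < mulLR m₁ σ n₁ := by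
  set u := (LMd g).c
  set u₀ := (LMd g₀).c
  have hMc : m.c + u = m₀.c + u₀ := by simpa using congrArg MMon.c hM
  have hMw : m.w * (LMd g).w * b = m₀.w * (LMd g₀).w * b₀ := by simpa using congrArg MMon.w hM
  obtain ⟨a, bb, cc, dd, l, r', hamb, hwL, rfl, hvL, rfl⟩ :=
    WordAmb.exists_of_mul_mul_eq hMw
  have hsup : u ⊔ u₀ ≤ m.c + u := sup_le le_add_self (hMc ▸ le_add_self)
  have hm : m = ⟨m.c + u - u ⊔ u₀, l⟩ * ⟨u ⊔ u₀ - u, a⟩ := by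
    ext : 1
    · exact ((tsub_add_tsub_cancel hsup le_sup_left).trans (add_tsub_cancel_right _ _)).symm
    · exact hwL
  have hm₀ : m₀ = ⟨m.c + u - u ⊔ u₀, l⟩ * ⟨u ⊔ u₀ - u₀, cc⟩ := by
    ext : 1
    · exact ((tsub_add_tsub_cancel hsup le_sup_right).trans (hMc ▸ add_tsub_cancel_right _ _)).symm
    · exact hvL
  have hlcm : (⟨u ⊔ u₀ - u₀, cc⟩ : MMon k n) * LMd g₀ * ⟨0, dd⟩ =
      ⟨u ⊔ u₀ - u, a⟩ * LMd g * ⟨0, bb⟩ := by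
    ext : 1
    · simp [u, u₀, tsub_add_cancel_of_le le_sup_left, tsub_add_cancel_of_le le_sup_right]
    · exact hamb.mul_eq.symm
  refine ⟨_, bb, _, dd, _, r', ⟨a, bb, cc, dd, hamb, rfl, rfl, rfl, rfl⟩, hm, rfl, hm₀, rfl, hlcm,
    ?_⟩
  rw [hm, hm₀, ← mulLR_mulLR, ← mulLR_mulLR] at hs
  exact (mulLR_strictMono hord _ r').lt_iff_lt.1 hs

lemma regAmb_of_lt [IsDomain R] [NeZero r] (hord : IsOrderSetting k n r) {β β₀ : SigModule R k n r}
    (hβ : β ≠ 0) (hβ₀ : β₀ ≠ 0) {m₁ m₂ : MMon k n} {n₁ n₂ : FreeMonoid (Fin n)}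
    (h : mulLR m₂ (sigMd β₀) n₂ < mulLR m₁ (sigMd β) n₁) : RegAmb β β₀ m₁ n₁ m₂ n₂ := by
  rw [RegAmb, sigb_scaleLR_of_ne_zero hord one_ne_zero hβ,
    sigb_scaleLR_of_ne_zero hord one_ne_zero hβ₀]
  exact fun he => h.ne' (WithBot.coe_inj.1 he)

end Ambiguities

section Coefficients

variable {R : Type} [CommRing R] [GCDMonoid R] {k n : ℕ} [LinearOrder (MMon k n)]
  {g g₀ : MixedAlg R k n}

lemma LC_mul_cofL (g g₀ : MixedAlg R k n) : LC g * cofL g g₀ = lcm (LC g) (LC g₀) :=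
  (Classical.choose_spec (dvd_lcm_left (LC g) (LC g₀))).symm

lemma LC_mul_cofR (g g₀ : MixedAlg R k n) : LC g₀ * cofR g g₀ = lcm (LC g) (LC g₀) :=
  (Classical.choose_spec (dvd_lcm_right (LC g) (LC g₀))).symm

lemma cofL_ne_zero (hg : g ≠ 0) (hg₀ : g₀ ≠ 0) : cofL g g₀ ≠ 0 := by
  refine right_ne_zero_of_mul (a := LC g) ?_
  rw [LC_mul_cofL]
  exact lcm_ne_zero_iff.2 ⟨LC_ne_zero hg, LC_ne_zero hg₀⟩

lemma cofR_ne_zero (hg : g ≠ 0) (hg₀ : g₀ ≠ 0) : cofR g g₀ ≠ 0 := by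
  refine right_ne_zero_of_mul (a := LC g₀) ?_
  rw [LC_mul_cofR]
  exact lcm_ne_zero_iff.2 ⟨LC_ne_zero hg, LC_ne_zero hg₀⟩

lemma exists_eq_mul_cofL (hg : g ≠ 0) {c : R} (hc : c ≠ 0) (hdvd : LC g₀ ∣ c * LC g) :
    ∃ e, e ≠ 0 ∧ c = e * cofL g g₀ := by
  obtain ⟨e, he⟩ := lcm_dvd (dvd_mul_left (LC g) c) hdvd
  rw [← LC_mul_cofL, mul_comm c, mul_assoc] at he
  have hce : c = e * cofL g g₀ := by
    rw [mul_left_cancel₀ (LC_ne_zero hg) he, mul_comm]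
  exact ⟨e, fun h0 => hc (by rw [hce, h0, zero_mul]), hce⟩

end Coefficients

lemma exists_bezout_left_ne_zero {R : Type} [CommRing R] [IsDomain R] [IsPrincipalIdealRing R]
    [GCDMonoid R] {a b : R} (ha : a ≠ 0) (hb : b ≠ 0) :
    ∃ c d, c ≠ 0 ∧ c * a + d * b = gcd a b := by
  obtain ⟨x, y, hxy⟩ := exists_gcd_eq_mul_add_mul a b
  by_cases hx : x = 0
  · obtain ⟨a', ha'⟩ := gcd_dvd_left a b
    obtain ⟨b', hb'⟩ := gcd_dvd_right a b
    have hgcd : gcd a b ≠ 0 := fun h0 => ha (by rw [ha', h0, zero_mul])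
    have hb'0 : b' ≠ 0 := fun h0 => hb (by rw [hb', h0, mul_zero])
    have key : b' * a = a' * b := mul_left_cancel₀ hgcd (by
      rw [← mul_assoc, ← mul_assoc, ← ha', ← hb', mul_comm])
    refine ⟨x + b', y - a', by rwa [hx, zero_add], ?_⟩
    linear_combination -hxy + key
  · exact ⟨x, y, hx, by rw [hxy]; ring⟩

section Reductions

variable {R : Type} [CommRing R] {k n r : ℕ} [LinearOrder (MMon k n)]
  [LinearOrder (ModMon k n r)] {G : Set (MixedAlg R k n × SigModule R k n r)}

lemma SigReducible.mono {f : MixedAlg R k n} {α α' : SigModule R k n r}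
    (h : SigReducible G f α') (hα : sigb α' ≤ sigb α) : SigReducible G f α := by
  obtain ⟨g, β, hgG, m, c, b, hc, hLT, hLM, hsig⟩ := h
  exact ⟨g, β, hgG, m, c, b, hc, hLT, hLM, hsig.trans hα⟩

lemma sigReducible_of_LTerm_eq {f g : MixedAlg R k n} {α β : SigModule R k n r} (hf : f ≠ 0)
    (hgG : (g, β) ∈ G) {m : MMon k n} {c : R} {b : FreeMonoid (Fin n)} (hc : c ≠ 0)
    (hLT : LTerm (trm m c * g * wrd b) = LTerm f) (hsig : sigb (scaleLR m c β b) ≤ sigb α) :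
    SigReducible G f α :=
  ⟨g, β, hgG, m, c, b, hc, hLT, LMb_sub_lt_of_LTerm_eq hf hLT, hsig⟩

lemma SigReducible.of_sub {f T : MixedAlg R k n} {α α' : SigModule R k n r}
    (h : SigReducible G (f - T) α') (hT : LMb T < LMb f) (hα : sigb α' ≤ sigb α) :
    SigReducible G f α := by
  obtain ⟨g, β, hgG, m, c, b, hc, hLT, hLM, hsig⟩ := h
  refine ⟨g, β, hgG, m, c, b, hc, hLT.trans (LTerm_sub_of_LMb_lt hT), ?_, hsig.trans hα⟩
  rw [LMb_sub_of_LMb_lt hT] at hLM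
  calc LMb (f - trm m c * g * wrd b)
      = LMb (f - T - trm m c * g * wrd b + T) := by abel_nf
    _ ≤ LMb (f - T - trm m c * g * wrd b) ⊔ LMb T := LMb_add_le
    _ < LMb f := sup_lt_iff.2 ⟨hLM, hT⟩

end Reductions

section Realizations

variable {R : Type} [CommRing R] {k n r : ℕ}
  {F : Fin r → MixedAlg R k n} {G : Set (MixedAlg R k n × SigModule R k n r)}
  {H : Set (SigModule R k n r)}

lemma ne_zero_of_mem_labeled (hGI : ∀ p ∈ G, Labeled F p) (h1 : ∀ p ∈ G, p.1 ≠ 0)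
    {g : MixedAlg R k n} {β : SigModule R k n r} (hgG : (g, β) ∈ G) : g ≠ 0 ∧ β ≠ 0 := by
  refine ⟨h1 _ hgG, ?_⟩
  rintro rfl
  exact h1 _ hgG (by rw [← hGI _ hgG, barMap_zero])

variable [LinearOrder (ModMon k n r)] [NeZero r]

lemma modReducible_congr {α δ : SigModule R k n r} (he : sigT δ = sigT α) :
    ModReducible H δ ↔ ModReducible H α := by
  rw [ModReducible, ModReducible, he]

lemma modReducible_iff_single {α : SigModule R k n r} {τ : ModMon k n r} (hle : sigb α ≤ τ)
    (hτ : α τ ≠ 0) : ModReducible H (single τ (α τ)) ↔ ModReducible H α :=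
  modReducible_congr (by rw [sigT_single hτ, sigT_eq_of_le hle hτ])

variable [LinearOrder (MMon k n)]

def SigRealized (G : Set (MixedAlg R k n × SigModule R k n r)) (α : SigModule R k n r)
    (M : MMon k n) : Prop :=
  ∃ g β, (g, β) ∈ G ∧ ∃ (m : MMon k n) (c : R) (b : FreeMonoid (Fin n)), c ≠ 0 ∧
    sigT α = sigT (scaleLR m c β b) ∧ m * LMd g * ⟨0, b⟩ = M

lemma modReducible_or_sigRealized
    (h3 : ∀ (τ : ModMon k n r) (c : R), c ≠ 0 →
        ModReducible (H ∪ {β | ∃ g, (g, β) ∈ G}) (Finsupp.single τ c))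
    {α : SigModule R k n r} (hα : α ≠ 0) : ModReducible H α ∨ ∃ M, SigRealized G α M := by
  obtain ⟨δ, hδ, m, c, b, hc, he⟩ := h3 (sigMd α) (sigC α) (sigC_ne_zero hα)
  rw [← sigT, sigT_sigT] at he
  rcases hδ with hδH | ⟨g, hgG⟩
  · exact .inl ⟨δ, hδH, m, c, b, hc, he⟩
  · exact .inr ⟨_, g, δ, hgG, m, c, b, hc, he, rfl⟩

lemma sigReducible_of_modReducible (hHsyz : ∀ γ ∈ H, IsSyzygy F γ) {α : SigModule R k n r}
    (hIH : IsSigGBUpTo F G (sigb α)) (hH : ModReducible H α) (hf : barMap F α ≠ 0) :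
    SigReducible G (barMap F α) α := by
  obtain ⟨γ, hγH, m, c, b, -, he⟩ := hH
  have hα : α ≠ 0 := fun h0 => hf (by rw [h0, barMap_zero])
  have hlt := sigb_sub_lt_of_sigT_eq hα he.symm
  have hbar := barMap_sub_scaleLR_of_isSyzygy F (hHsyz γ hγH) α m c b
  exact (hIH _ _ hbar hf hlt).mono hlt.le

end Realizations

section Steps

variable {R : Type} [CommRing R] {k n r : ℕ}
  [LinearOrder (MMon k n)] [LinearOrder (ModMon k n r)] (hord : IsOrderSetting k n r)
  {F : Fin r → MixedAlg R k n} {G : Set (MixedAlg R k n × SigModule R k n r)}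
  {H : Set (SigModule R k n r)}
include hord

lemma LMd_GPolP {g g₀ : MixedAlg R k n} {c d : R} {m₁ m₂ : MMon k n} {n₁ n₂ : FreeMonoid (Fin n)}
    (hg : g ≠ 0) (hg₀ : g₀ ≠ 0) (hlcm : m₂ * LMd g₀ * ⟨0, n₂⟩ = m₁ * LMd g * ⟨0, n₁⟩)
    (hcd : c * LC g + d * LC g₀ ≠ 0) :
    LMd (GPolP c d g g₀ m₁ n₁ m₂ n₂) = m₁ * LMd g * ⟨0, n₁⟩ := by
  refine LMd_eq_of_le (LMb_add_le.trans (sup_le (LMb_trm_mul_mul_wrd_le hord (coe_LMd hg).ge)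
    (hlcm ▸ LMb_trm_mul_mul_wrd_le hord (coe_LMd hg₀).ge))) ?_
  rwa [GPolP, MonoidAlgebra.coeff_add, Finsupp.add_apply, coeff_trm_mul_mul_wrd_apply, ← hlcm,
    coeff_trm_mul_mul_wrd_apply]

lemma LC_GPolP {g g₀ : MixedAlg R k n} {c d : R} {m₁ m₂ : MMon k n} {n₁ n₂ : FreeMonoid (Fin n)}
    (hg : g ≠ 0) (hg₀ : g₀ ≠ 0) (hlcm : m₂ * LMd g₀ * ⟨0, n₂⟩ = m₁ * LMd g * ⟨0, n₁⟩)
    (hcd : c * LC g + d * LC g₀ ≠ 0) :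
    LC (GPolP c d g g₀ m₁ n₁ m₂ n₂) = c * LC g + d * LC g₀ := by
  rw [LC, LMd_GPolP hord hg hg₀ hlcm hcd, GPolP, MonoidAlgebra.coeff_add, Finsupp.add_apply,
    coeff_trm_mul_mul_wrd_apply, ← hlcm, coeff_trm_mul_mul_wrd_apply]
  rfl

variable [IsDomain R]

lemma exists_reducer_of_sigReducible_sub (h1 : ∀ p ∈ G, p.1 ≠ 0) {f g : MixedAlg R k n}
    {α : SigModule R k n r} {m : MMon k n} {c : R} {b : FreeMonoid (Fin n)}
    (hg : g ≠ 0) (hf : LMb f ≤ ↑(m * LMd g * ⟨0, b⟩))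
    (hcoef : f.coeff (m * LMd g * ⟨0, b⟩) ≠ c * LC g)
    (hred : SigReducible G (f - trm m c * g * wrd b) α) :
    ∃ g₀ β₀, (g₀, β₀) ∈ G ∧ ∃ (m₀ : MMon k n) (c₀ : R) (b₀ : FreeMonoid (Fin n)), c₀ ≠ 0 ∧
      m * LMd g * ⟨0, b⟩ = m₀ * LMd g₀ * ⟨0, b₀⟩ ∧
      c * LC g + c₀ * LC g₀ = f.coeff (m * LMd g * ⟨0, b⟩) ∧
      sigb (scaleLR m₀ c₀ β₀ b₀) ≤ sigb α := by
  obtain ⟨g₀, β₀, hg₀G, m₀, c₀, b₀, hc₀, hLT, -, hsig⟩ := hred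
  set M := m * LMd g * (⟨0, b⟩ : MMon k n)
  have hval : (f - trm m c * g * wrd b).coeff M = f.coeff M - c * LC g := by
    rw [MonoidAlgebra.coeff_sub, Finsupp.sub_apply, coeff_trm_mul_mul_wrd_apply]
    rfl
  have hle : LMb (f - trm m c * g * wrd b) ≤ M :=
    LMb_sub_le.trans (sup_le hf (LMb_trm_mul_mul_wrd_le hord (coe_LMd hg).ge))
  rw [LTerm_eq_of_le hle (hval ▸ sub_ne_zero.2 hcoef), hval,
    LTerm_trm_mul_mul_wrd hord hc₀ (h1 _ hg₀G)] at hLT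
  rcases MonoidAlgebra.single_inj.1 hLT with ⟨hM, hC⟩ | ⟨h0, -⟩
  · exact ⟨g₀, β₀, hg₀G, m₀, c₀, b₀, hc₀, hM.symm, by rw [hC]; ring, hsig⟩
  · exact absurd h0 (mul_ne_zero hc₀ (LC_ne_zero (h1 _ hg₀G)))

variable [NeZero r]

lemma ambSIG_eq_of_lt [GCDMonoid R] {g g₀ : MixedAlg R k n} {β β₀ : SigModule R k n r}
    {m₁ m₂ : MMon k n} {n₁ n₂ : FreeMonoid (Fin n)} (hg : g ≠ 0) (hg₀ : g₀ ≠ 0) (hβ : β ≠ 0)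
    (hβ₀ : β₀ ≠ 0) (hlt : mulLR m₂ (sigMd β₀) n₂ < mulLR m₁ (sigMd β) n₁) :
    ambSIG g g₀ β β₀ m₁ n₁ m₂ n₂ = single (mulLR m₁ (sigMd β) n₁) (cofL g g₀ * sigC β) := by
  rw [ambSIG, if_pos, sigT_scaleLR hord (cofL_ne_zero hg hg₀) hβ]
  rw [sigb_scaleLR_of_ne_zero hord (cofR_ne_zero hg hg₀) hβ₀,
    sigb_scaleLR_of_ne_zero hord (cofL_ne_zero hg hg₀) hβ]
  exact WithBot.coe_le_coe.2 hlt.le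

lemma sigb_GPolM {β β₀ : SigModule R k n r} {c d : R} {m₁ m₂ : MMon k n}
    {n₁ n₂ : FreeMonoid (Fin n)} (hc : c ≠ 0) (hβ : β ≠ 0) (hβ₀ : β₀ ≠ 0)
    (hlt : mulLR m₂ (sigMd β₀) n₂ < mulLR m₁ (sigMd β) n₁) :
    sigb (GPolM c d β β₀ m₁ n₁ m₂ n₂) = mulLR m₁ (sigMd β) n₁ := by
  have h₂le : sigb (scaleLR m₂ d β₀ n₂) ≤ mulLR m₂ (sigMd β₀) n₂ :=
    sigb_scaleLR_le hord (coe_sigMd hβ₀).ge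
  refine support_max_eq_of_le (support_max_add_le.trans (sup_le
    (sigb_scaleLR_le hord (coe_sigMd hβ).ge) (h₂le.trans (WithBot.coe_le_coe.2 hlt.le)))) ?_
  rw [GPolM, Finsupp.add_apply, scaleLR_apply_mulLR,
    apply_eq_zero_of_support_max_lt (h₂le.trans_lt (WithBot.coe_lt_coe.2 hlt)), add_zero]
  exact mul_ne_zero hc (sigC_ne_zero hβ)

/-- A reducer of the G-polynomial of the ambiguity underlying the two multiples, scaled up,
reduces `f`. -/
lemma sigReducible_of_add_LC_eq [IsPrincipalIdealRing R] [GCDMonoid R]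
    (hGI : ∀ p ∈ G, Labeled F p) (h1 : ∀ p ∈ G, p.1 ≠ 0) (h2 : CompleteSet G)
    {g g₀ f : MixedAlg R k n} {β β₀ α : SigModule R k n r} (hgG : (g, β) ∈ G)
    (hg₀G : (g₀, β₀) ∈ G) {m m₀ : MMon k n} {c c₀ : R} {b b₀ : FreeMonoid (Fin n)}
    (hc : c ≠ 0) (hc₀ : c₀ ≠ 0) (hM : m * LMd g * ⟨0, b⟩ = m₀ * LMd g₀ * ⟨0, b₀⟩)
    (hsig₀ : sigb (scaleLR m₀ c₀ β₀ b₀) < sigb (scaleLR m c β b))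
    (hf : f ≠ 0) (hLMf : LMd f = m * LMd g * ⟨0, b⟩) (hLCf : c * LC g + c₀ * LC g₀ = LC f)
    (hsig : sigb (scaleLR m c β b) ≤ sigb α) : SigReducible G f α := by
  obtain ⟨hg, hβ⟩ := ne_zero_of_mem_labeled hGI h1 hgG
  obtain ⟨hg₀, hβ₀⟩ := ne_zero_of_mem_labeled hGI h1 hg₀G
  rw [sigb_scaleLR_of_ne_zero hord hc hβ, sigb_scaleLR_of_ne_zero hord hc₀ hβ₀,
    WithBot.coe_lt_coe] at hsig₀
  obtain ⟨m₁, n₁, m₂, n₂, m', b', hamb, rfl, rfl, rfl, rfl, hlcm, hlt⟩ :=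
    exists_isAmb_of_LMd_eq hord hM hsig₀
  obtain ⟨c', d', hc', hbez⟩ := exists_bezout_left_ne_zero (LC_ne_zero hg) (LC_ne_zero hg₀)
  have hgcd : gcd (LC g) (LC g₀) ≠ 0 := fun h0 => LC_ne_zero hg ((gcd_eq_zero_iff _ _).1 h0).1
  have hPsig := sigb_GPolM hord (d := d') hc' hβ hβ₀ hlt
  have hLC := LC_GPolP hord hg hg₀ hlcm (hbez ▸ hgcd)
  have hPne : GPolP c' d' g g₀ m₁ n₁ m₂ n₂ ≠ 0 := fun h0 =>
    hgcd (by rw [← hbez, ← hLC, h0, LC_zero])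
  have hSIG : sigb (ambSIG g g₀ β β₀ m₁ n₁ m₂ n₂) = mulLR m₁ (sigMd β) n₁ := by
    rw [ambSIG_eq_of_lt hord hg hg₀ hβ hβ₀ hlt,
      sigb_single (mul_ne_zero (cofL_ne_zero hg hg₀) (sigC_ne_zero hβ))]
  obtain ⟨g₂, β₂, hg₂G, m₃, c₂, b₂, hc₂, hLT₂, -, hsig₂⟩ :=
    h2 g β g₀ β₀ hgG hg₀G m₁ n₁ m₂ n₂ hamb c' d' hbez (hPsig.trans hSIG.symm)
  obtain ⟨hLM₂, hLC₂⟩ := (LTerm_eq_LTerm_iff hPne).1 hLT₂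
  have hT₂ : trm m₃ c₂ * g₂ * wrd b₂ ≠ 0 := trm_mul_mul_wrd_ne_zero hord hc₂ (h1 _ hg₂G)
  obtain ⟨w, hw⟩ : gcd (LC g) (LC g₀) ∣ LC f :=
    hLCf ▸ dvd_add ((gcd_dvd_left _ _).mul_left c) ((gcd_dvd_right _ _).mul_left c₀)
  have hw0 : w ≠ 0 := fun h0 => LC_ne_zero hf (by rw [hw, h0, mul_zero])
  refine sigReducible_of_LTerm_eq (m := m' * m₃) (b := b₂ * b') hf hg₂G (mul_ne_zero hw0 hc₂) ?_
    (le_trans ?_ hsig)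
  · rw [← trm_mul_trm_mul_mul_wrd, LTerm_trm_mul_mul_wrd hord hw0 hT₂, hLM₂, hLC₂,
      LMd_GPolP hord hg hg₀ hlcm (hbez ▸ hgcd), hLC, hbez, LTerm, hLMf, hw, mul_comm,
      MMon.mul_mul_word_assoc]
  · rw [← scaleLR_scaleLR, sigb_scaleLR_of_ne_zero hord hc (hβ), ← mulLR_mulLR]
    exact sigb_scaleLR_le hord (hsig₂.trans_eq hPsig)

/-- The cover of the ambiguity underlying the two cancelling multiples, scaled up, splits `sig(α)`
into a `G`-part of smaller leading monomial and an `H`-part. -/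
lemma modReducible_or_sigRealized_lt [GCDMonoid R] (hGI : ∀ p ∈ G, Labeled F p)
    (h1 : ∀ p ∈ G, p.1 ≠ 0)
    (h4 : ∀ g₁ β₁ g₂ β₂, (g₁, β₁) ∈ G → (g₂, β₂) ∈ G →
        ∀ m₁ n₁ m₂ n₂, IsAmb g₁ g₂ m₁ n₁ m₂ n₂ → RegAmb β₁ β₂ m₁ n₁ m₂ n₂ →
          CoveredBy G H (ambSIG g₁ g₂ β₁ β₂ m₁ n₁ m₂ n₂) (ambLM g₁ m₁ n₁))
    {g g₀ : MixedAlg R k n} {β β₀ α : SigModule R k n r} (hgG : (g, β) ∈ G)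
    (hg₀G : (g₀, β₀) ∈ G) {m m₀ : MMon k n} {c c₀ : R} {b b₀ : FreeMonoid (Fin n)}
    (hc : c ≠ 0) (hc₀ : c₀ ≠ 0) (hM : m * LMd g * ⟨0, b⟩ = m₀ * LMd g₀ * ⟨0, b₀⟩)
    (hsig₀ : sigb (scaleLR m₀ c₀ β₀ b₀) < sigb (scaleLR m c β b))
    (hcoef : c * LC g + c₀ * LC g₀ = 0) (hα : sigT α = sigT (scaleLR m c β b)) :
    ModReducible H α ∨ ∃ γ ∈ H, ∃ (mH : MMon k n) (cH : R) (bH : FreeMonoid (Fin n)),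
      sigb (α - scaleLR mH cH γ bH) = sigb α ∧
      ∃ M < m * LMd g * ⟨0, b⟩, SigRealized G (α - scaleLR mH cH γ bH) M := by
  obtain ⟨hg, hβ⟩ := ne_zero_of_mem_labeled hGI h1 hgG
  obtain ⟨hg₀, hβ₀⟩ := ne_zero_of_mem_labeled hGI h1 hg₀G
  rw [sigb_scaleLR_of_ne_zero hord hc hβ, sigb_scaleLR_of_ne_zero hord hc₀ hβ₀,
    WithBot.coe_lt_coe] at hsig₀
  obtain ⟨m₁, n₁, m₂, n₂, m', b', hamb, rfl, rfl, rfl, rfl, -, hlt⟩ :=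
    exists_isAmb_of_LMd_eq hord hM hsig₀
  obtain ⟨e, he, rfl⟩ : ∃ e, e ≠ 0 ∧ c = e * cofL g g₀ :=
    exists_eq_mul_cofL hg hc ⟨-c₀, by linear_combination hcoef⟩
  obtain ⟨g'', β'', hg''G, γ, hγH, mc, cc, bc, mc', cc', bc', hcov, hLM⟩ :=
    h4 g β g₀ β₀ hgG hg₀G m₁ n₁ m₂ n₂ hamb (regAmb_of_lt hord hβ hβ₀ hlt)
  have hα0 : α ≠ 0 := fun h0 => scaleLR_ne_zero hord hc hβ
    (sigT_eq_zero_iff.1 (by rw [← hα, h0, sigT_zero]))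
  have hsplit : sigT α = sigT (scaleLR (m' * mc) (e * cc) β'' (bc * b')) +
      sigT (scaleLR (m' * mc') (e * cc') γ (bc' * b')) := by
    have hscaled : scaleLR m' e (ambSIG g g₀ β β₀ m₁ n₁ m₂ n₂) b' = sigT α := by
      rw [ambSIG_eq_of_lt hord hg hg₀ hβ hβ₀ hlt, scaleLR_single, hα, sigT_scaleLR hord hc hβ,
        mulLR_mulLR, mul_assoc]
    rw [← hscaled, hcov, scaleLR_add, scaleLR_sigT hord he, scaleLR_sigT hord he,
      scaleLR_scaleLR, scaleLR_scaleLR]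
  by_cases hX₁ : scaleLR (m' * mc) (e * cc) β'' (bc * b') = 0
  · rw [hX₁, sigT_zero, zero_add] at hsplit
    have hX₂ : scaleLR (m' * mc') (e * cc') γ (bc' * b') ≠ 0 := fun h0 =>
      hα0 (sigT_eq_zero_iff.1 (by rw [hsplit, h0, sigT_zero]))
    exact .inl ⟨γ, hγH, _, _, _, ne_zero_of_scaleLR_ne_zero hX₂, hsplit⟩
  have hecc := ne_zero_of_scaleLR_ne_zero hX₁
  obtain ⟨hT, hsb⟩ := sigT_sub_of_sigT_eq_add hα0 hX₁ hsplit
  refine .inr ⟨γ, hγH, _, _, _, hsb, _, ?_, g'', β'', hg''G, _, _, _, hecc, hT, rfl⟩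
  rw [LMb_trm_mul_mul_wrd_of_ne_zero hord (right_ne_zero_of_mul hecc) (h1 _ hg''G),
    WithBot.coe_lt_coe] at hLM
  rw [MMon.mul_mul_word_assoc, MMon.mul_mul_word_assoc]
  exact MMon.mul_mul_word_strictMono hord m' b' hLM

end Steps

section SignatureBasis

variable {R : Type} [CommRing R] [IsDomain R] [IsPrincipalIdealRing R] [GCDMonoid R]
  {k n r : ℕ} [NeZero r] [LinearOrder (MMon k n)] [LinearOrder (ModMon k n r)]
  (hord : IsOrderSetting k n r)
  {F : Fin r → MixedAlg R k n} {G : Set (MixedAlg R k n × SigModule R k n r)}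
  {H : Set (SigModule R k n r)}
  (hGI : ∀ p ∈ G, Labeled F p) (hHsyz : ∀ γ ∈ H, IsSyzygy F γ) (h1 : ∀ p ∈ G, p.1 ≠ 0)
  (h2 : CompleteSet G)
  (h3 : ∀ (τ : ModMon k n r) (c : R), c ≠ 0 →
      ModReducible (H ∪ {β | ∃ g, (g, β) ∈ G}) (Finsupp.single τ c))
  (h4 : ∀ g₁ β₁ g₂ β₂, (g₁, β₁) ∈ G → (g₂, β₂) ∈ G →
      ∀ m₁ n₁ m₂ n₂, IsAmb g₁ g₂ m₁ n₁ m₂ n₂ → RegAmb β₁ β₂ m₁ n₁ m₂ n₂ →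
        CoveredBy G H (ambSIG g₁ g₂ β₁ β₂ m₁ n₁ m₂ n₂) (ambLM g₁ m₁ n₁))
include hord hGI hHsyz h1 h2 h4

lemma sigReducible_of_sigRealized {σ : WithBot (ModMon k n r)} (hIH : IsSigGBUpTo F G σ)
    (M : MMon k n) :
    ∀ α, sigb α = σ → SigRealized G α M → barMap F α ≠ 0 → SigReducible G (barMap F α) α := by
  induction M using hord.mon_wf.induction with
  | _ M IHM =>
  rintro α rfl ⟨g, β, hgG, m, c, b, hc, hα, rfl⟩ hf
  obtain ⟨hg, hβ⟩ := ne_zero_of_mem_labeled hGI h1 hgG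
  have hα0 : α ≠ 0 := fun h0 => hf (by rw [h0, barMap_zero])
  have hsb : sigb (scaleLR m c β b) = sigb α := (sigb_eq_of_sigT_eq hα).symm
  have hsub := sigb_sub_lt_of_sigT_eq hα0 hα.symm
  have hbar : barMap F (α - scaleLR m c β b) = barMap F α - trm m c * g * wrd b := by
    rw [barMap_sub, barMap_scaleLR, hGI _ hgG]
  have hLMT := LMb_trm_mul_mul_wrd_of_ne_zero hord hc hg (m := m) (b := b)
  by_cases hfT : barMap F α - trm m c * g * wrd b = 0
  · rw [sub_eq_zero] at hfT
    exact sigReducible_of_LTerm_eq hf hgG hc (by rw [hfT]) hsb.le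
  have hred := hIH _ _ hbar hfT hsub
  rcases lt_or_ge ↑(m * LMd g * ⟨0, b⟩) (LMb (barMap F α)) with hgt | hle
  · exact hred.of_sub (hLMT ▸ hgt) hsub.le
  by_cases hcoef : (barMap F α).coeff (m * LMd g * ⟨0, b⟩) = c * LC g
  · have hLMd : LMd (barMap F α) = m * LMd g * ⟨0, b⟩ :=
      LMd_eq_of_le hle (hcoef ▸ mul_ne_zero hc (LC_ne_zero hg))
    refine sigReducible_of_LTerm_eq hf hgG hc ?_ hsb.le
    have hLC : LC (barMap F α) = c * LC g := by rw [LC, hLMd, hcoef]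
    rw [LTerm_trm_mul_mul_wrd hord hc hg, LTerm, hLC, hLMd]
  obtain ⟨g₀, β₀, hg₀G, m₀, c₀, b₀, hc₀, hM, hsum, hsig₀⟩ :=
    exists_reducer_of_sigReducible_sub hord h1 hg hle hcoef hred
  have hsig₀' := hsig₀.trans_lt (hsub.trans_eq hsb.symm)
  rcases hle.lt_or_eq with hlt | heq
  · rw [apply_eq_zero_of_support_max_lt hlt] at hsum
    rcases modReducible_or_sigRealized_lt hord hGI h1 h4 hgG hg₀G hc hc₀ hM hsig₀' hsum hα with
      hH | ⟨γ, hγH, mH, cH, bH, hsbH, M', hM', hreal⟩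
    · exact sigReducible_of_modReducible hHsyz hIH hH hf
    · have hbarH := barMap_sub_scaleLR_of_isSyzygy F (hHsyz γ hγH) α mH cH bH
      have := IHM M' hM' _ hsbH hreal (hbarH ▸ hf)
      rw [hbarH] at this
      exact this.mono hsbH.le
  · have hLMd : LMd (barMap F α) = m * LMd g * ⟨0, b⟩ := WithBot.coe_inj.1 ((coe_LMd hf).trans heq)
    rw [← hLMd] at hsum
    exact sigReducible_of_add_LC_eq hord hGI h1 h2 hgG hg₀G hc hc₀ hM hsig₀' hf hLMd hsum hsb.le

include h3

lemma sigReducible_of_isSigGBUpTo {α : SigModule R k n r} (hIH : IsSigGBUpTo F G (sigb α))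
    (hf : barMap F α ≠ 0) : SigReducible G (barMap F α) α := by
  have hα : α ≠ 0 := fun h0 => hf (by rw [h0, barMap_zero])
  rcases modReducible_or_sigRealized h3 hα with hH | ⟨M, hM⟩
  · exact sigReducible_of_modReducible hHsyz hIH hH hf
  · exact sigReducible_of_sigRealized hord hGI hHsyz h1 h2 h4 hIH M α rfl hM hf

theorem isSigGB : IsSigGB F G := by
  have : WellFoundedLT (ModMon k n r) := ⟨hord.mod_wf⟩
  have hupto : ∀ σ, IsSigGBUpTo F G σ := fun σ => by
    induction σ using WellFoundedLT.induction with
    | _ σ IH =>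
    rintro _ α rfl hf hlt
    exact sigReducible_of_isSigGBUpTo hord hGI hHsyz h1 h2 h3 h4 (IH _ hlt) hf
  rintro _ α rfl hf
  exact sigReducible_of_isSigGBUpTo hord hGI hHsyz h1 h2 h3 h4 (hupto _) hf

end SignatureBasis

section SyzygyBasis

variable {R : Type} [CommRing R] [IsDomain R] {k n r : ℕ} [NeZero r] [LinearOrder (MMon k n)]
  [LinearOrder (ModMon k n r)]
  (hord : IsOrderSetting k n r)
  {F : Fin r → MixedAlg R k n} {G : Set (MixedAlg R k n × SigModule R k n r)}
  {H : Set (SigModule R k n r)}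
include hord

lemma exists_of_modReducible_single {τ : ModMon k n r} {v : R} (hv : v ≠ 0)
    (h : ModReducible H (single τ v)) :
    ∃ γ ∈ H, γ ≠ 0 ∧ ∃ (p : MMon k n) (c : R) (q : FreeMonoid (Fin n)),
      mulLR p (sigMd γ) q = τ ∧ c * sigC γ = v := by
  obtain ⟨γ, hγH, p, c, q, hc, he⟩ := h
  rw [sigT_single hv] at he
  have hγ : γ ≠ 0 := by
    rintro rfl
    rw [scaleLR_zero, sigT_zero, single_eq_zero] at he
    exact hv he
  rw [sigT_scaleLR hord hc hγ, single_eq_single_iff] at he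
  rcases he with ⟨hτ, hv'⟩ | ⟨h0, -⟩
  · exact ⟨γ, hγH, hγ, p, c, q, hτ.symm, hv'.symm⟩
  · exact absurd h0 hv

variable [IsPrincipalIdealRing R] [GCDMonoid R]

/-- The sig-Combination of the two reducers has the gcd of their signature coefficients as
coefficient, and this gcd divides `v₁ + v₂`. -/
lemma modReducible_single_add (h2' : SigCompleteSet H) {τ : ModMon k n r} {v₁ v₂ : R}
    (hv₁ : v₁ ≠ 0) (hv₂ : v₂ ≠ 0) (hv : v₁ + v₂ ≠ 0) (h₁ : ModReducible H (single τ v₁))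
    (h₂ : ModReducible H (single τ v₂)) : ModReducible H (single τ (v₁ + v₂)) := by
  obtain ⟨γ₁, hγ₁H, hγ₁, p₁, c₁, q₁, hτ₁, rfl⟩ := exists_of_modReducible_single hord hv₁ h₁
  obtain ⟨γ₂, hγ₂H, hγ₂, p₂, c₂, q₂, hτ₂, rfl⟩ := exists_of_modReducible_single hord hv₂ h₂
  obtain ⟨τ', hlcm, ⟨p₁', q₁', hτ₁'⟩, ⟨p₂', q₂', hτ₂'⟩, ⟨p, q, hτ'⟩⟩ := exists_monLcm hτ₁ hτ₂
  obtain ⟨x, y, hxy⟩ := exists_gcd_eq_mul_add_mul (sigC γ₁) (sigC γ₂)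
  have hbez : x * sigC γ₁ + y * sigC γ₂ = gcd (sigC γ₁) (sigC γ₂) := by rw [hxy]; ring
  have hgcd : gcd (sigC γ₁) (sigC γ₂) ≠ 0 := fun h0 =>
    sigC_ne_zero hγ₁ ((gcd_eq_zero_iff _ _).1 h0).1
  set Z := scaleLR p₁' x γ₁ q₁' + scaleLR p₂' y γ₂ q₂'
  have hZle : sigb Z ≤ τ' := support_max_add_le.trans (sup_le
    (hτ₁' ▸ sigb_scaleLR_le hord (coe_sigMd hγ₁).ge)
    (hτ₂' ▸ sigb_scaleLR_le hord (coe_sigMd hγ₂).ge))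
  have hZval : Z τ' = gcd (sigC γ₁) (sigC γ₂) := by
    rw [Finsupp.add_apply, ← hbez, ← hτ₁', scaleLR_apply_mulLR, hτ₁', ← hτ₂', scaleLR_apply_mulLR]
    rfl
  have hZ : ModReducible H (single τ' (gcd (sigC γ₁) (sigC γ₂))) := by
    refine (modReducible_congr ?_).1
      (h2' γ₁ hγ₁H γ₂ hγ₂H τ' hlcm p₁' q₁' p₂' q₂' hτ₁' hτ₂' x y hbez)
    rw [sigT_eq_of_le hZle (hZval ▸ hgcd), hZval, sigT_single hgcd]
  obtain ⟨γ, hγH, hγ, p₃, c₃, q₃, hτ₃, hc₃⟩ := exists_of_modReducible_single hord hgcd hZ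
  obtain ⟨w, hw⟩ : gcd (sigC γ₁) (sigC γ₂) ∣ c₁ * sigC γ₁ + c₂ * sigC γ₂ :=
    dvd_add ((gcd_dvd_left _ _).mul_left _) ((gcd_dvd_right _ _).mul_left _)
  have hwc : w * c₃ ≠ 0 := mul_ne_zero (right_ne_zero_of_mul (hw ▸ hv))
    (left_ne_zero_of_mul (hc₃ ▸ hgcd))
  refine ⟨γ, hγH, p * p₃, w * c₃, q₃ * q, hwc, ?_⟩
  rw [sigT_single hv, sigT_scaleLR hord hwc hγ, ← mulLR_mulLR, hτ₃, hτ', mul_assoc, hc₃, hw,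
    mul_comm]

lemma modReducible_of_sub (h2' : SigCompleteSet H) {α γ : SigModule R k n r} (hγH : γ ∈ H)
    {m : MMon k n} {c : R} {b : FreeMonoid (Fin n)} (h : ModReducible H (α - scaleLR m c γ b))
    (hsb : sigb (α - scaleLR m c γ b) = sigb α) : ModReducible H α := by
  set X := scaleLR m c γ b
  by_cases hX : X = 0
  · rwa [hX, sub_zero] at h
  have hα : α ≠ 0 := by
    rintro rfl
    exact hX (neg_eq_zero.1 (sigb_eq_bot_iff.1 (by rw [← zero_sub, hsb, sigb_eq_bot_iff])))
  have hαX : α - X ≠ 0 := fun h0 => hα (sigb_eq_bot_iff.1 (by rw [← hsb, h0, sigb_eq_bot_iff]))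
  set τ := sigMd α
  have hle : sigb (α - X) ≤ τ := hsb.trans (coe_sigMd hα).symm |>.le
  have hXle : sigb X ≤ τ := by
    rw [← sub_sub_cancel α X]
    exact support_max_sub_le.trans (sup_le (coe_sigMd hα).ge hle)
  have hαXτ : (α - X) τ ≠ 0 := by
    have hmd : sigMd (α - X) = τ :=
      WithBot.coe_inj.1 ((coe_sigMd hαX).trans (hsb.trans (coe_sigMd hα).symm))
    rw [← hmd]
    exact sigC_ne_zero hαX
  have hsplit : (α - X) τ + X τ = α τ := by rw [Finsupp.sub_apply, sub_add_cancel]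
  have hXred : ModReducible H X := ⟨γ, hγH, m, c, b, ne_zero_of_scaleLR_ne_zero hX, rfl⟩
  rw [← modReducible_iff_single hle hαXτ] at h
  rw [← modReducible_iff_single (coe_sigMd hα).ge (sigC_ne_zero hα), ← hsplit]
  by_cases hXτ : X τ = 0
  · rwa [hXτ, add_zero]
  exact modReducible_single_add hord h2' hαXτ hXτ (hsplit ▸ sigC_ne_zero hα) h
    ((modReducible_iff_single hXle hXτ).2 hXred)

variable (hGI : ∀ p ∈ G, Labeled F p) (hHsyz : ∀ γ ∈ H, IsSyzygy F γ) (h1 : ∀ p ∈ G, p.1 ≠ 0)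
  (h2' : SigCompleteSet H)
  (h4 : ∀ g₁ β₁ g₂ β₂, (g₁, β₁) ∈ G → (g₂, β₂) ∈ G →
      ∀ m₁ n₁ m₂ n₂, IsAmb g₁ g₂ m₁ n₁ m₂ n₂ → RegAmb β₁ β₂ m₁ n₁ m₂ n₂ →
        CoveredBy G H (ambSIG g₁ g₂ β₁ β₂ m₁ n₁ m₂ n₂) (ambLM g₁ m₁ n₁))
  (hGB : IsSigGB F G)
include hGI hHsyz h1 h2' h4 hGB

lemma modReducible_of_sigRealized (M : MMon k n) :
    ∀ γ, IsSyzygy F γ → SigRealized G γ M → ModReducible H γ := by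
  induction M using hord.mon_wf.induction with
  | _ M IHM =>
  rintro γ hsyz ⟨g, β, hgG, m, c, b, hc, hγ, rfl⟩
  obtain ⟨hg, hβ⟩ := ne_zero_of_mem_labeled hGI h1 hgG
  have hγ0 : γ ≠ 0 := fun h0 => scaleLR_ne_zero hord hc hβ
    (sigT_eq_zero_iff.1 (by rw [← hγ, h0, sigT_zero]))
  have hbar : barMap F (γ - scaleLR m c β b) = 0 - trm m c * g * wrd b := by
    rw [barMap_sub, barMap_scaleLR, hGI _ hgG, hsyz]
  have hred := hGB _ _ hbar (by
    rw [zero_sub, neg_ne_zero]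
    exact trm_mul_mul_wrd_ne_zero hord hc hg)
  obtain ⟨g₀, β₀, hg₀G, m₀, c₀, b₀, hc₀, hM, hsum, hsig₀⟩ :=
    exists_reducer_of_sigReducible_sub hord h1 hg (by simp [LMb])
      (by simpa using (mul_ne_zero hc (LC_ne_zero hg)).symm) hred
  rw [MonoidAlgebra.coeff_zero, Finsupp.zero_apply] at hsum
  have hsig₀' : sigb (scaleLR m₀ c₀ β₀ b₀) < sigb (scaleLR m c β b) :=
    hsig₀.trans_lt ((sigb_sub_lt_of_sigT_eq hγ0 hγ.symm).trans_eq (sigb_eq_of_sigT_eq hγ))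
  rcases modReducible_or_sigRealized_lt hord hGI h1 h4 hgG hg₀G hc hc₀ hM hsig₀' hsum hγ with
    hH | ⟨δ, hδH, mH, cH, bH, hsbH, M', hM', hreal⟩
  · exact hH
  · have hsyz' := (barMap_sub_scaleLR_of_isSyzygy F (hHsyz δ hδH) γ mH cH bH).trans hsyz
    exact modReducible_of_sub hord h2' hδH (IHM M' hM' _ hsyz' hreal) hsbH

theorem isSyzBasis
    (h3 : ∀ (τ : ModMon k n r) (c : R), c ≠ 0 →
        ModReducible (H ∪ {β | ∃ g, (g, β) ∈ G}) (Finsupp.single τ c)) :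
    IsSyzBasis F H := fun γ hsyz hγ =>
  (modReducible_or_sigRealized h3 hγ).elim id fun ⟨M, hM⟩ =>
    modReducible_of_sigRealized hord hGI hHsyz h1 h2' h4 hGB M γ hsyz hM

end SyzygyBasis

/-- Theorem 5.2: the cover criterion.  If (1) all elements of
`G` have nonzero polynomial part, (2) `G` is complete and `H` is sig-complete,
(3) all module terms are reducible by `H ∪ {β : g^{[β]} ∈ G}`, and (4) all
regular ambiguities of `G` are covered by `(G, H)`, then `G` is a signature
Gröbner basis and `H` is a syzygy basis of `I^{[Σ]}`. -/
theorem cover_criterion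
    {R : Type} [CommRing R] [IsDomain R] [IsPrincipalIdealRing R] [GCDMonoid R]
    {k n r : ℕ} [NeZero r]
    [LinearOrder (MMon k n)] [LinearOrder (ModMon k n r)]
    (hord : IsOrderSetting k n r)
    (F : Fin r → MixedAlg R k n)
    (G : Set (MixedAlg R k n × SigModule R k n r))
    (H : Set (SigModule R k n r))
    (hGI : ∀ p ∈ G, Labeled F p)
    (hHsyz : ∀ γ ∈ H, IsSyzygy F γ)
    (h1 : ∀ p ∈ G, p.1 ≠ 0)
    (h2 : CompleteSet G)
    (h2' : SigCompleteSet H)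
    (h3 : ∀ (τ : ModMon k n r) (c : R), c ≠ 0 →
        ModReducible (H ∪ {β | ∃ g, (g, β) ∈ G}) (Finsupp.single τ c))
    (h4 : ∀ g₁ β₁ g₂ β₂, (g₁, β₁) ∈ G → (g₂, β₂) ∈ G →
        ∀ m₁ n₁ m₂ n₂, IsAmb g₁ g₂ m₁ n₁ m₂ n₂ → RegAmb β₁ β₂ m₁ n₁ m₂ n₂ →
          CoveredBy G H (ambSIG g₁ g₂ β₁ β₂ m₁ n₁ m₂ n₂) (ambLM g₁ m₁ n₁)) :
    IsSigGB F G ∧ IsSyzBasis F H := by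
  have hGB := isSigGB hord hGI hHsyz h1 h2 h3 h4
  exact ⟨hGB, isSyzBasis hord hGI hHsyz h1 h2' h4 hGB h3⟩
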